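/- arXiv:1211.4457 — 6 statements merged into one kernel-verified Lean document; each statement's English description precedes it below -/
import Mathlib

section
/- The integral over (0,1) of (ln(t/(1-t)))^2 dt equals π²/3. -/
open MeasureTheory Real Set

private lemma img_exp_neg : (fun u : ℝ => Real.exp (-u)) '' Set.Ioi 0 = Set.Ioo 0 1 := by
  ext y
  constructor
  · rintro ⟨u, hu, rfl⟩
    exact ⟨Real.exp_pos _, Real.exp_lt_one_iff.2 (by simpa using hu)⟩
  · rintro ⟨hy0, hy1⟩
    exact ⟨-Real.log y, by simpa using Real.log_neg hy0 hy1, by simp [Real.exp_log hy0]⟩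

private lemma hderiv_exp_neg : ∀ u ∈ Set.Ioi (0:ℝ),
    HasDerivWithinAt (fun u : ℝ => Real.exp (-u)) (-Real.exp (-u)) (Set.Ioi 0) u := by
  intro u _
  have : HasDerivAt (fun u : ℝ => Real.exp (-u)) (Real.exp (-u) * (-1)) u :=
    (Real.hasDerivAt_exp (-u)).comp u (hasDerivAt_neg u)
  simpa using this.hasDerivWithinAt

private lemma hinj_exp_neg : Set.InjOn (fun u : ℝ => Real.exp (-u)) (Set.Ioi 0) :=
  (Real.exp_injective.comp neg_injective).injOn

private lemma subst_exp_neg (g : ℝ → ℝ) :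
    ∫ t in Set.Ioo (0:ℝ) 1, g t
      = ∫ u in Set.Ioi (0:ℝ), Real.exp (-u) * g (Real.exp (-u)) := by
  rw [← img_exp_neg,
    integral_image_eq_integral_abs_deriv_smul measurableSet_Ioi hderiv_exp_neg hinj_exp_neg g]
  refine setIntegral_congr_fun measurableSet_Ioi fun u _ => ?_
  simp [abs_of_pos (Real.exp_pos _), smul_eq_mul]

private lemma subst_exp_neg_int (g : ℝ → ℝ) :
    IntegrableOn g (Set.Ioo (0:ℝ) 1) ↔
      IntegrableOn (fun u => Real.exp (-u) * g (Real.exp (-u))) (Set.Ioi (0:ℝ)) := by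
  rw [← img_exp_neg,
    integrableOn_image_iff_integrableOn_abs_deriv_smul measurableSet_Ioi hderiv_exp_neg
      hinj_exp_neg g]
  constructor <;> intro h <;> refine h.congr_fun (fun u _ => ?_) measurableSet_Ioi <;>
    simp [abs_of_pos (Real.exp_pos _), smul_eq_mul]

private lemma log_sq_integral : ∫ t in Set.Ioo (0:ℝ) 1, (Real.log t) ^ 2 = 2 := by
  rw [subst_exp_neg]
  have h := Real.integral_rpow_mul_exp_neg_mul_Ioi (a := 3) (r := 1) (by norm_num) one_pos
  have h2 : Real.Gamma 3 = 2 := by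
    have := Real.Gamma_nat_eq_factorial 2
    norm_num at this
    convert this using 2
    norm_num
  rw [h2] at h
  simp only [one_div, inv_one, Real.one_rpow, one_mul] at h
  rw [← h]
  refine setIntegral_congr_fun measurableSet_Ioi fun u hu => ?_
  rw [Real.log_exp, neg_sq]
  rw [show (3:ℝ) - 1 = ((2:ℕ):ℝ) by norm_num, Real.rpow_natCast]
  ring_nf

private lemma log_sq_integrable : IntegrableOn (fun t => (Real.log t) ^ 2) (Set.Ioo (0:ℝ) 1) := by
  rw [subst_exp_neg_int]
  have h := Real.GammaIntegral_convergent (s := 3) (by norm_num)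
  refine h.congr_fun (fun u hu => ?_) measurableSet_Ioi
  rw [Real.log_exp, neg_sq]
  rw [show (3:ℝ) - 1 = ((2:ℕ):ℝ) by norm_num]
  simp only [Real.rpow_natCast]

private lemma exp_aux (n : ℕ) (u : ℝ) :
    Real.exp (-u) * Real.exp (-u) ^ (n + 1) = Real.exp (-(((n:ℝ) + 2) * u)) := by
  rw [← Real.exp_nat_mul, ← Real.exp_add]
  congr 1
  push_cast
  ring

private lemma pow_mul_neg_log_integral (n : ℕ) :
    ∫ t in Set.Ioo (0:ℝ) 1, t ^ (n + 1) * (-Real.log t) = 1 / ((n:ℝ) + 2) ^ 2 := by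
  rw [subst_exp_neg]
  have hr : (0:ℝ) < (n:ℝ) + 2 := by positivity
  have h := Real.integral_rpow_mul_exp_neg_mul_Ioi (a := 2) (r := (n:ℝ) + 2) (by norm_num) hr
  have h2 : Real.Gamma 2 = 1 := by
    have := Real.Gamma_nat_eq_factorial 1
    norm_num at this
    convert this using 2
    norm_num
  rw [h2, mul_one] at h
  have key : ∫ u in Set.Ioi (0:ℝ),
      Real.exp (-u) * (Real.exp (-u) ^ (n + 1) * (-Real.log (Real.exp (-u))))
      = ∫ t in Set.Ioi (0:ℝ), t ^ ((2:ℝ) - 1) * Real.exp (-(((n:ℝ) + 2) * t)) := by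
    refine setIntegral_congr_fun measurableSet_Ioi fun u hu => ?_
    rw [Real.log_exp, neg_neg,
      show (2:ℝ) - 1 = 1 by norm_num, Real.rpow_one, ← exp_aux n u]
    ring
  rw [key, h]
  rw [show (2:ℝ) = ((2:ℕ):ℝ) by norm_num, Real.rpow_natCast, div_pow, one_pow]

private lemma pow_mul_neg_log_integrable (n : ℕ) :
    IntegrableOn (fun t => t ^ (n + 1) * (-Real.log t)) (Set.Ioo (0:ℝ) 1) := by
  rw [subst_exp_neg_int]
  have hr : (0:ℝ) < (n:ℝ) + 2 := by positivity
  have h := integrableOn_rpow_mul_exp_neg_mul_rpow (p := 1) (s := 1) (b := (n:ℝ) + 2)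
    (by norm_num) one_pos hr
  simp only [Real.rpow_one] at h
  refine h.congr_fun (fun u hu => ?_) measurableSet_Ioi
  beta_reduce
  rw [Real.log_exp, neg_neg, neg_mul, ← exp_aux n u]
  ring

private lemma reflect_img : (fun t : ℝ => 1 - t) '' Set.Ioo 0 1 = Set.Ioo 0 1 := by
  rw [Set.image_const_sub_Ioo]
  norm_num

private lemma reflect_deriv : ∀ t ∈ Set.Ioo (0:ℝ) 1,
    HasDerivWithinAt (fun t : ℝ => 1 - t) (-1) (Set.Ioo 0 1) t := fun t _ =>
  ((hasDerivAt_id t).const_sub 1).hasDerivWithinAt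

private lemma reflect_inj : Set.InjOn (fun t : ℝ => 1 - t) (Set.Ioo 0 1) :=
  fun a _ b _ h => by dsimp at h; linarith

private lemma reflect (g : ℝ → ℝ) :
    ∫ t in Set.Ioo (0:ℝ) 1, g (1 - t) = ∫ t in Set.Ioo (0:ℝ) 1, g t := by
  conv_rhs => rw [← reflect_img]
  rw [integral_image_eq_integral_abs_deriv_smul measurableSet_Ioo reflect_deriv reflect_inj g]
  refine setIntegral_congr_fun measurableSet_Ioo fun t _ => ?_
  norm_num

private lemma reflect_int (g : ℝ → ℝ) (h : IntegrableOn g (Set.Ioo (0:ℝ) 1)) :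
    IntegrableOn (fun t => g (1 - t)) (Set.Ioo (0:ℝ) 1) := by
  rw [← reflect_img] at h
  rw [integrableOn_image_iff_integrableOn_abs_deriv_smul measurableSet_Ioo reflect_deriv
    reflect_inj g] at h
  refine h.congr_fun (fun t _ => ?_) measurableSet_Ioo
  norm_num

private lemma log1sub_sq_integral : ∫ t in Set.Ioo (0:ℝ) 1, (Real.log (1 - t)) ^ 2 = 2 := by
  rw [reflect (fun t => (Real.log t) ^ 2)]
  exact log_sq_integral

private lemma log1sub_sq_integrable :
    IntegrableOn (fun t => (Real.log (1 - t)) ^ 2) (Set.Ioo (0:ℝ) 1) :=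
  reflect_int (fun t => (Real.log t) ^ 2) log_sq_integrable

private lemma cross_integrable :
    IntegrableOn (fun t => Real.log t * Real.log (1 - t)) (Set.Ioo (0:ℝ) 1) := by
  refine Integrable.mono' (log_sq_integrable.add log1sub_sq_integrable)
    ((Real.measurable_log.mul
      (Real.measurable_log.comp (measurable_const.sub measurable_id))).aestronglyMeasurable)
    (Filter.Eventually.of_forall fun t => ?_)
  have h1 : ‖Real.log t * Real.log (1 - t)‖ = |Real.log t| * |Real.log (1 - t)| := by
    rw [Real.norm_eq_abs, abs_mul]
  rw [h1]
  simp only [Pi.add_apply]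
  nlinarith [sq_nonneg (|Real.log t| - |Real.log (1 - t)|), sq_abs (Real.log t),
    sq_abs (Real.log (1 - t)), abs_nonneg (Real.log t), abs_nonneg (Real.log (1 - t))]

private noncomputable def fser (n : ℕ) : ℝ → ℝ :=
  fun t => t ^ (n + 1) * (-Real.log t) / ((n:ℝ) + 1)

private lemma fser_integral (n : ℕ) :
    ∫ t in Set.Ioo (0:ℝ) 1, fser n t = 1 / (((n:ℝ) + 1) * ((n:ℝ) + 2) ^ 2) := by
  unfold fser
  rw [integral_div, pow_mul_neg_log_integral n]
  have h1 : ((n:ℝ) + 1) ≠ 0 := by positivity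
  have h2 : ((n:ℝ) + 2) ≠ 0 := by positivity
  field_simp

private lemma fser_integrable (n : ℕ) : IntegrableOn (fser n) (Set.Ioo (0:ℝ) 1) :=
  (pow_mul_neg_log_integrable n).div_const _

private lemma fser_nonneg {n : ℕ} {t : ℝ} (ht : t ∈ Set.Ioo (0:ℝ) 1) : 0 ≤ fser n t := by
  unfold fser
  have h1 : 0 ≤ -Real.log t := neg_nonneg.2 (Real.log_nonpos ht.1.le ht.2.le)
  have h2 : 0 ≤ t ^ (n + 1) := pow_nonneg ht.1.le _
  have h3 : (0:ℝ) < (n:ℝ) + 1 := by positivity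
  exact div_nonneg (mul_nonneg h2 h1) h3.le

private lemma summable_c : Summable (fun n : ℕ => 1 / (((n:ℝ) + 1) * ((n:ℝ) + 2) ^ 2)) := by
  have hb : Summable (fun n : ℕ => 1 / ((n:ℝ) + 1) ^ 2) := by
    have := (summable_nat_add_iff (f := fun n : ℕ => 1 / (n:ℝ) ^ 2) 1).2
      hasSum_zeta_two.summable
    refine this.congr fun n => ?_
    push_cast
    ring_nf
  refine Summable.of_nonneg_of_le (fun n => by positivity) (fun n => ?_) hb
  rw [div_le_div_iff₀ (by positivity) (by positivity)]
  nlinarith [Nat.cast_nonneg (α := ℝ) n]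

private lemma hasSum_sq_shift :
    HasSum (fun n : ℕ => 1 / ((n:ℝ) + 2) ^ 2) (Real.pi ^ 2 / 6 - 1) := by
  have h0 := (hasSum_nat_add_iff' (f := fun n : ℕ => 1 / (n:ℝ) ^ 2) 2).2 hasSum_zeta_two
  have : ∑ i ∈ Finset.range 2, 1 / (i:ℝ) ^ 2 = 1 := by
    simp [Finset.sum_range_succ]
  rw [this] at h0
  refine h0.congr_fun fun n => ?_
  push_cast
  ring_nf

private lemma hasSum_tel :
    HasSum (fun n : ℕ => 1 / ((n:ℝ) + 1) - 1 / ((n:ℝ) + 2)) 1 := by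
  rw [hasSum_iff_tendsto_nat_of_nonneg]
  · have key : ∀ n : ℕ, ∑ i ∈ Finset.range n, (1 / ((i:ℝ) + 1) - 1 / ((i:ℝ) + 2))
        = 1 - 1 / ((n:ℝ) + 1) := by
      intro n
      have h := Finset.sum_range_sub' (f := fun i : ℕ => 1 / ((i:ℝ) + 1)) n
      calc ∑ i ∈ Finset.range n, (1 / ((i:ℝ) + 1) - 1 / ((i:ℝ) + 2))
          = ∑ i ∈ Finset.range n, (1 / ((i:ℝ) + 1) - 1 / (((i + 1 : ℕ):ℝ) + 1)) := by
            refine Finset.sum_congr rfl fun i _ => ?_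
            push_cast
            ring_nf
        _ = 1 / (((0:ℕ):ℝ) + 1) - 1 / ((n:ℝ) + 1) := h
        _ = 1 - 1 / ((n:ℝ) + 1) := by norm_num
    simp only [key]
    have := tendsto_one_div_add_atTop_nhds_zero_nat (𝕜 := ℝ)
    have h2 := (tendsto_const_nhds (x := (1:ℝ)) (f := Filter.atTop (α := ℕ))).sub this
    simpa using h2
  · intro n
    have h1 : (0:ℝ) < (n:ℝ) + 1 := by positivity
    have h2 : (0:ℝ) < (n:ℝ) + 2 := by positivity
    rw [sub_nonneg, div_le_div_iff₀ h2 h1]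
    linarith

private lemma hasSum_c :
    HasSum (fun n : ℕ => 1 / (((n:ℝ) + 1) * ((n:ℝ) + 2) ^ 2)) (2 - Real.pi ^ 2 / 6) := by
  have h := hasSum_tel.sub hasSum_sq_shift
  have he : (2 - Real.pi ^ 2 / 6 : ℝ) = 1 - (Real.pi ^ 2 / 6 - 1) := by ring
  rw [he]
  refine h.congr_fun fun n => ?_
  have h1 : ((n:ℝ) + 1) ≠ 0 := by positivity
  have h2 : ((n:ℝ) + 2) ≠ 0 := by positivity
  field_simp
  ring

private lemma cross_integral :
    ∫ t in Set.Ioo (0:ℝ) 1, Real.log t * Real.log (1 - t) = 2 - Real.pi ^ 2 / 6 := by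
  have hstep : ∫ t in Set.Ioo (0:ℝ) 1, Real.log t * Real.log (1 - t)
      = ∫ t in Set.Ioo (0:ℝ) 1, ∑' n : ℕ, fser n t := by
    refine setIntegral_congr_fun measurableSet_Ioo fun t ht => ?_
    have habs : |t| < 1 := by
      rw [abs_of_pos ht.1]; exact ht.2
    have hsum := (hasSum_pow_div_log_of_abs_lt_one habs).mul_left (-Real.log t)
    have : Real.log t * Real.log (1 - t) = -Real.log t * -Real.log (1 - t) := by ring
    rw [this, ← hsum.tsum_eq]
    refine tsum_congr fun n => ?_
    unfold fser
    ring
  rw [hstep]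
  have hmeas : ∀ n : ℕ, AEStronglyMeasurable (fser n)
      (volume.restrict (Set.Ioo (0:ℝ) 1)) := by
    intro n
    exact (((measurable_id.pow_const (n+1)).mul
      Real.measurable_log.neg).div_const _).aestronglyMeasurable
  have hnorm : ∀ n : ℕ, ∫ t in Set.Ioo (0:ℝ) 1, ‖fser n t‖
      = 1 / (((n:ℝ) + 1) * ((n:ℝ) + 2) ^ 2) := by
    intro n
    rw [← fser_integral n]
    refine setIntegral_congr_fun measurableSet_Ioo fun t ht => ?_
    rw [Real.norm_eq_abs, abs_of_nonneg (fser_nonneg ht)]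
  have hlint : ∑' n : ℕ, ∫⁻ t, ‖fser n t‖ₑ ∂(volume.restrict (Set.Ioo (0:ℝ) 1)) ≠ ⊤ := by
    have heq : ∀ n : ℕ, ∫⁻ t, ‖fser n t‖ₑ ∂(volume.restrict (Set.Ioo (0:ℝ) 1))
        = ENNReal.ofReal (1 / (((n:ℝ) + 1) * ((n:ℝ) + 2) ^ 2)) := by
      intro n
      rw [← MeasureTheory.ofReal_integral_norm_eq_lintegral_enorm (fser_integrable n),
        hnorm n]
    simp only [heq]
    rw [← ENNReal.ofReal_tsum_of_nonneg (fun n => by positivity) summable_c]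
    exact ENNReal.ofReal_ne_top
  rw [MeasureTheory.integral_tsum hmeas hlint]
  have : ∀ n : ℕ, ∫ t in Set.Ioo (0:ℝ) 1, fser n t
      = 1 / (((n:ℝ) + 1) * ((n:ℝ) + 2) ^ 2) := fser_integral
  simp only [this]
  exact hasSum_c.tsum_eq

theorem stmt_1 :
    ∫ t in Set.Ioo (0:ℝ) 1, (Real.log (t / (1 - t))) ^ 2 = Real.pi ^ 2 / 3 := by
  have hcongr : ∫ t in Set.Ioo (0:ℝ) 1, (Real.log (t / (1 - t))) ^ 2
      = ∫ t in Set.Ioo (0:ℝ) 1,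
          ((Real.log t) ^ 2 + (Real.log (1 - t)) ^ 2
            - 2 * (Real.log t * Real.log (1 - t))) := by
    refine setIntegral_congr_fun measurableSet_Ioo fun t ht => ?_
    rw [Real.log_div (ne_of_gt ht.1) (by linarith [ht.2] : (1:ℝ) - t ≠ 0)]
    ring
  have hadd : IntegrableOn (fun t => (Real.log t) ^ 2 + (Real.log (1 - t)) ^ 2)
      (Set.Ioo (0:ℝ) 1) := log_sq_integrable.add log1sub_sq_integrable
  have hc2 : IntegrableOn (fun t => 2 * (Real.log t * Real.log (1 - t)))
      (Set.Ioo (0:ℝ) 1) := cross_integrable.const_mul 2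
  rw [hcongr, integral_sub hadd hc2,
    integral_add log_sq_integrable log1sub_sq_integrable,
    integral_const_mul, log_sq_integral, log1sub_sq_integral, cross_integral]
  ring
end

section
/- The integral over (0,∞) of (ln x)² / (1+x)² dx equals π²/3. -/
open MeasureTheory Real

section Aux

open Set

private lemma lemB5 {b : ℝ} (hb : 0 < b) :
    ∫ u in Ioi (0:ℝ), u ^ 2 * Real.exp (-(b * u)) = 2 / b ^ 3 := by
  have h := Real.integral_rpow_mul_exp_neg_mul_Ioi (a := 3) (r := b) (by norm_num) hb
  have he : ∀ u ∈ Ioi (0:ℝ), u ^ ((3:ℝ) - 1) * Real.exp (-(b * u))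
      = u ^ 2 * Real.exp (-(b * u)) := by
    intro u hu
    rw [show (3:ℝ) - 1 = ((2:ℕ):ℝ) by norm_num, Real.rpow_natCast]
  rw [setIntegral_congr_fun measurableSet_Ioi he] at h
  rw [h, show (3:ℝ) = ((2:ℕ):ℝ) + 1 by norm_num, Real.Gamma_nat_eq_factorial,
    show (1/b) ^ (((2:ℕ):ℝ)+1) = (1/b) ^ ((3:ℕ):ℝ) by norm_num, Real.rpow_natCast]
  field_simp
  norm_num [Nat.factorial]

private lemma lemC5 {b : ℝ} (hb : 0 < b) :
    IntegrableOn (fun u : ℝ => u ^ 2 * Real.exp (-(b * u))) (Ioi 0) := by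
  have h := integrableOn_rpow_mul_exp_neg_mul_rpow (s := 2) (p := 1) (b := b)
    (by norm_num) (by norm_num) hb
  refine h.congr_fun (fun u hu => ?_) measurableSet_Ioi
  beta_reduce
  rw [Real.rpow_one, show (2:ℝ) = ((2:ℕ):ℝ) by norm_num, Real.rpow_natCast, neg_mul]

private lemma lemA5 : HasSum (fun n : ℕ => ((-1:ℝ)) ^ n / ((n:ℝ) + 1) ^ 2) (π ^ 2 / 12) := by
  have h0 := hasSum_zeta_two
  have h1 : HasSum (fun n : ℕ => (1:ℝ) / ((n:ℝ) + 1) ^ 2) (π ^ 2 / 6) := by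
    have h := (hasSum_nat_add_iff' (f := fun n : ℕ => (1:ℝ) / (n:ℝ) ^ 2) 1).mpr h0
    simp only [Finset.range_one, Finset.sum_singleton, Nat.cast_zero] at h
    norm_num at h
    convert h using 1
    · rfl
    funext n; ring
  have h2 : HasSum (fun k : ℕ => (2:ℝ) / (((2*k+1:ℕ):ℝ) + 1) ^ 2) (π ^ 2 / 12) := by
    have h := h1.mul_left (1/2)
    convert h using 1
    · rfl
    · funext k; push_cast; rw [div_eq_mul_inv, div_eq_mul_inv]
      rw [show ((2:ℝ)*k+1+1) = 2*(k+1) by ring, mul_pow]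
      field_simp
    · ring
  have h3 : HasSum (fun n : ℕ => if Odd n then (2:ℝ) / ((n:ℝ) + 1) ^ 2 else 0)
      (π ^ 2 / 12) := by
    have hinj : Function.Injective (fun k : ℕ => 2 * k + 1) := by
      intro a b h; dsimp only at h; omega
    rw [← hinj.hasSum_iff]
    · convert h2 using 1
      funext k
      simp [Function.comp, Nat.odd_iff]
    · intro n hn
      simp only [Set.mem_range, not_exists] at hn
      have : ¬ Odd n := by
        rintro ⟨k, hk⟩; exact hn k (by omega)
      simp [this]
  have h4 := h1.sub h3
  convert h4 using 1
  · rfl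
  · funext n
    rcases Nat.even_or_odd n with he | ho
    · simp [Nat.not_odd_iff_even.mpr he, he.neg_one_pow]
    · rw [if_pos ho, ho.neg_one_pow]
      ring
  · ring

end Aux

theorem stmt_5 :
    ∫ x in Set.Ioi (0:ℝ), (Real.log x) ^ 2 / (1 + x) ^ 2 = Real.pi ^ 2 / 3 := by
  open Set in
  -- Step 1: substitution x = exp u
  have step1 :
      ∫ x in Set.Ioi (0:ℝ), (Real.log x) ^ 2 / (1 + x) ^ 2
        = ∫ u : ℝ, Real.exp u * (u ^ 2 / (1 + Real.exp u) ^ 2) := by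
    have him : Real.exp '' univ = Ioi (0:ℝ) := by
      rw [image_univ, Real.range_exp]
    have hder : ∀ x ∈ (univ : Set ℝ), HasDerivWithinAt Real.exp (Real.exp x) univ x :=
      fun x _ => (Real.hasDerivAt_exp x).hasDerivWithinAt
    have hinj : (univ : Set ℝ).InjOn Real.exp := Real.exp_injective.injOn
    have h := integral_image_eq_integral_abs_deriv_smul MeasurableSet.univ hder hinj
      (fun x => (Real.log x) ^ 2 / (1 + x) ^ 2)
    rw [him] at h
    rw [h, Measure.restrict_univ]
    congr 1
    funext u
    rw [Real.log_exp, abs_of_pos (Real.exp_pos u), smul_eq_mul]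
  -- Step 2: evenness
  have step2 :
      ∫ u : ℝ, Real.exp u * (u ^ 2 / (1 + Real.exp u) ^ 2)
        = 2 * ∫ u in Ioi (0:ℝ), Real.exp u * (u ^ 2 / (1 + Real.exp u) ^ 2) := by
    rw [← integral_comp_abs (f := fun u : ℝ => Real.exp u * (u ^ 2 / (1 + Real.exp u) ^ 2))]
    congr 1
    funext u
    rcases abs_choice u with h | h
    · rw [h]
    · rw [h]
      have hp := Real.exp_pos u
      rw [Real.exp_neg]
      have h1 : (1 + (Real.exp u)⁻¹) ^ 2 = (1 + Real.exp u)^2 / (Real.exp u)^2 := by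
        field_simp; ring
      rw [h1]
      field_simp
  -- the summands
  set F : ℕ → ℝ → ℝ :=
    fun n u => ((-1:ℝ)) ^ n * ((n:ℝ) + 1) * (u ^ 2 * Real.exp (-(((n:ℝ) + 1) * u))) with hF
  have hb : ∀ n : ℕ, (0:ℝ) < (n:ℝ) + 1 := fun n => by positivity
  -- Step 3: pointwise series expansion on Ioi 0
  have step3 : ∀ u ∈ Ioi (0:ℝ),
      Real.exp u * (u ^ 2 / (1 + Real.exp u) ^ 2) = ∑' n : ℕ, F n u := by
    intro u hu
    have hu0 : (0:ℝ) < u := hu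
    set r : ℝ := -Real.exp (-u) with hr
    have hrlt : ‖r‖ < 1 := by
      rw [hr, norm_neg, Real.norm_eq_abs, abs_of_pos (Real.exp_pos _)]
      exact Real.exp_lt_one_iff.mpr (by linarith)
    have hg1 := hasSum_coe_mul_geometric_of_norm_lt_one hrlt
    have hg2 := hasSum_geometric_of_norm_lt_one hrlt
    have hsum := (hg1.add hg2).mul_left (u ^ 2 * Real.exp (-u))
    have hfun : (fun n : ℕ => u ^ 2 * Real.exp (-u) * ((n:ℝ) * r ^ n + r ^ n))
        = fun n : ℕ => F n u := by
      funext n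
      have hrn : r ^ n = (-1:ℝ) ^ n * Real.exp (-(n * u)) := by
        rw [hr, neg_pow, ← Real.exp_nat_mul]
        ring_nf
      simp only [hF]
      rw [hrn, show (-(((n:ℝ) + 1) * u)) = -(n * u) + -u by ring, Real.exp_add]
      ring
    rw [hfun] at hsum
    rw [hsum.tsum_eq]
    have hne : (1:ℝ) - r ≠ 0 := by
      rw [hr]; intro h; nlinarith [Real.exp_pos (-u)]
    have hval : u ^ 2 * Real.exp (-u) * (r / (1 - r) ^ 2 + (1 - r)⁻¹)
        = u ^ 2 * Real.exp (-u) / (1 - r) ^ 2 := by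
      field_simp
      ring
    rw [hval, hr]
    have hp := Real.exp_pos u
    rw [Real.exp_neg, show (1:ℝ) - -(Real.exp u)⁻¹ = 1 + (Real.exp u)⁻¹ by ring]
    have h1 : (1 + (Real.exp u)⁻¹) ^ 2 = (1 + Real.exp u)^2 / (Real.exp u)^2 := by
      field_simp; ring
    rw [h1]
    field_simp
  -- integrability of each F n
  have hFint : ∀ n : ℕ, Integrable (F n) (volume.restrict (Ioi (0:ℝ))) := by
    intro n
    exact (lemC5 (hb n)).const_mul _
  -- norm integrals
  have hFnormval : (fun n : ℕ => ∫ u in Ioi (0:ℝ), ‖F n u‖)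
      = fun n : ℕ => 2 / ((n:ℝ) + 1) ^ 2 := by
    funext n
    have heq : ∀ u ∈ Ioi (0:ℝ), ‖F n u‖
        = ((n:ℝ) + 1) * (u ^ 2 * Real.exp (-(((n:ℝ) + 1) * u))) := by
      intro u hu
      rw [hF]
      rw [Real.norm_eq_abs, abs_mul, abs_mul, abs_pow, abs_neg, abs_one, one_pow, one_mul,
        abs_of_pos (hb n), abs_of_nonneg (by positivity)]
    rw [setIntegral_congr_fun measurableSet_Ioi heq, integral_const_mul, lemB5 (hb n)]
    have := hb n
    field_simp
  have hFnorm : Summable (fun n : ℕ => ∫ u in Ioi (0:ℝ), ‖F n u‖) := by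
    rw [hFnormval]
    have h1 : Summable (fun n : ℕ => (1:ℝ) / ((n:ℝ) + 1) ^ 2) := lemA5.summable.abs.congr
      (by
        intro n
        rw [abs_div, abs_pow, abs_neg, abs_one, one_pow, abs_of_pos (by positivity)])
    exact (h1.mul_left 2).congr (fun n => by ring)
  -- Step 4: interchange sum and integral
  have step4 := integral_tsum_of_summable_integral_norm (μ := volume.restrict (Ioi (0:ℝ)))
    hFint hFnorm
  -- value of each integral
  have hFval : ∀ n : ℕ, ∫ u in Ioi (0:ℝ), F n u
      = ((-1:ℝ)) ^ n * (2 / ((n:ℝ) + 1) ^ 2) := by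
    intro n
    rw [hF]
    rw [integral_const_mul, lemB5 (hb n)]
    have := hb n
    field_simp
  -- the final sum
  have hfinal : HasSum (fun n : ℕ => ((-1:ℝ)) ^ n * (2 / ((n:ℝ) + 1) ^ 2)) (π ^ 2 / 6) := by
    have h := lemA5.mul_left 2
    convert h using 1
    · rfl
    · funext n; ring
    · ring
  rw [step1, step2]
  have step4' : ∫ u in Ioi (0:ℝ), Real.exp u * (u ^ 2 / (1 + Real.exp u) ^ 2)
      = ∑' n : ℕ, ∫ u in Ioi (0:ℝ), F n u := by
    rw [setIntegral_congr_fun measurableSet_Ioi step3]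
    exact step4.symm
  rw [step4']
  simp_rw [hFval]
  rw [hfinal.tsum_eq]
  ring
end

section
/- For every x > 0, the integral over (0,∞) of x·(ln u)²/(1+ux)² du equals (ln x)² + π²/3. -/
open MeasureTheory Real Set Filter


lemma aux_deriv (c : ℝ) (hc : 0 < c) (s : ℝ) :
    HasDerivAt (fun s : ℝ => -((s ^ 2 / c + 2 * s / c ^ 2 + 2 / c ^ 3) * Real.exp (-(c * s))))
      (s ^ 2 * Real.exp (-(c * s))) s := by
  have h1 : HasDerivAt (fun s : ℝ => s ^ 2 / c + 2 * s / c ^ 2 + 2 / c ^ 3)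
      (2 * s / c + 2 / c ^ 2) s := by
    have := (((hasDerivAt_pow 2 s).div_const c).add
      (((hasDerivAt_id s).const_mul 2).div_const (c ^ 2))).add_const (2 / c ^ 3)
    refine this.congr_deriv ?_
    norm_num
  have h2 : HasDerivAt (fun s : ℝ => Real.exp (-(c * s))) (Real.exp (-(c * s)) * (-c)) s := by
    have : HasDerivAt (fun s : ℝ => -(c * s)) (-c) s := by
      exact (((hasDerivAt_id s).const_mul c).neg).congr_deriv (by ring)
    exact (Real.hasDerivAt_exp _).comp s this
  have := (h1.mul h2).neg
  refine this.congr_deriv ?_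
  have hec : Real.exp (-(c * s)) ≠ 0 := Real.exp_ne_zero _
  field_simp
  ring

lemma aux_tendsto (c : ℝ) (hc : 0 < c) :
    Tendsto (fun s : ℝ => -((s ^ 2 / c + 2 * s / c ^ 2 + 2 / c ^ 3) * Real.exp (-(c * s))))
      atTop (nhds 0) := by
  have key : ∀ n : ℕ, Tendsto (fun s : ℝ => s ^ n * Real.exp (-(c * s))) atTop (nhds 0) := by
    intro n
    have h1 : Tendsto (fun s : ℝ => c * s) atTop atTop :=
      (tendsto_id.const_mul_atTop hc)
    have h2 := (Real.tendsto_pow_mul_exp_neg_atTop_nhds_zero n).comp h1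
    have h3 : Tendsto (fun s : ℝ => ((c * s) ^ n * Real.exp (-(c * s))) / c ^ n) atTop (nhds 0) := by
      simpa using h2.div_const (c ^ n)
    refine h3.congr' ?_
    filter_upwards [eventually_gt_atTop 0] with s hs
    field_simp
    ring
  have := ((((key 2).div_const c).add (((key 1).const_mul 2).div_const (c ^ 2))).add
    (((key 0).const_mul (2 / c ^ 3)))).neg
  simp only [add_zero, zero_div, mul_zero, zero_add, neg_zero] at this
  refine this.congr ?_
  intro s
  field_simp

lemma expint_integrable (c : ℝ) (hc : 0 < c) :
    IntegrableOn (fun s : ℝ => s ^ 2 * Real.exp (-(c * s))) (Set.Ioi 0) := by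
  refine integrableOn_Ioi_deriv_of_nonneg ?_ (fun s _ => aux_deriv c hc s) ?_ (aux_tendsto c hc)
  · exact (Continuous.continuousWithinAt (by continuity))
  · intro s hs
    positivity

lemma expint_val (c : ℝ) (hc : 0 < c) :
    ∫ s in Set.Ioi (0:ℝ), s ^ 2 * Real.exp (-(c * s)) = 2 / c ^ 3 := by
  have := integral_Ioi_of_hasDerivAt_of_tendsto
    (Continuous.continuousWithinAt (f := fun s : ℝ =>
      -((s ^ 2 / c + 2 * s / c ^ 2 + 2 / c ^ 3) * Real.exp (-(c * s)))) (by continuity))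
    (fun s _ => aux_deriv c hc s) (expint_integrable c hc) (aux_tendsto c hc)
  rw [this]
  simp

lemma basel_shift : HasSum (fun n : ℕ => 1 / ((n : ℝ) + 1) ^ 2) (π ^ 2 / 6) := by
  have h := hasSum_zeta_two
  have h2 : HasSum (fun n : ℕ => (1 : ℝ) / ((n : ℕ) + 1 : ℕ) ^ 2) (π ^ 2 / 6 - ∑ i ∈ Finset.range 1, 1 / (i : ℝ) ^ 2) :=
    (hasSum_nat_add_iff' 1).mpr h
  simp only [Finset.range_one, Finset.sum_singleton, Nat.cast_zero] at h2
  norm_num at h2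
  convert h2 using 2 with n
  push_cast
  ring

lemma eta_two : HasSum (fun n : ℕ => (-1 : ℝ) ^ n * (2 / ((n : ℝ) + 1) ^ 2)) (π ^ 2 / 6) := by
  set g : ℕ → ℝ := fun n => 1 / ((n : ℝ) + 1) ^ 2 with hg
  have hS := basel_shift
  -- odd part of g
  have hodd : HasSum (fun k : ℕ => g (2 * k + 1)) (π ^ 2 / 24) := by
    have := hS.mul_left (1 / 4)
    have e : (1 / 4 : ℝ) * (π ^ 2 / 6) = π ^ 2 / 24 := by ring
    rw [e] at this
    refine this.congr_fun fun k => ?_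
    simp only [hg]
    push_cast
    field_simp
    ring
  -- even part of g is summable
  have heven_summable : Summable (fun k : ℕ => g (2 * k)) := by
    refine Summable.of_nonneg_of_le (fun k => by positivity) (fun k => ?_) hS.summable
    simp only [hg]
    gcongr
    push_cast
    linarith [Nat.cast_nonneg (α := ℝ) k]
  have heven : HasSum (fun k : ℕ => g (2 * k)) (π ^ 2 / 8) := by
    have hE := heven_summable.hasSum
    have h1 : HasSum g (∑' k, g (2 * k) + π ^ 2 / 24) := HasSum.even_add_odd hE hodd
    have h2 : ∑' k, g (2 * k) + π ^ 2 / 24 = π ^ 2 / 6 := h1.unique hS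
    have : ∑' k, g (2 * k) = π ^ 2 / 8 := by linarith
    rwa [this] at hE
  -- now the alternating series
  set a : ℕ → ℝ := fun n => (-1 : ℝ) ^ n * (2 / ((n : ℝ) + 1) ^ 2) with ha
  have hae : HasSum (fun k : ℕ => a (2 * k)) (π ^ 2 / 4) := by
    have := heven.mul_left 2
    have e : (2 : ℝ) * (π ^ 2 / 8) = π ^ 2 / 4 := by ring
    rw [e] at this
    refine this.congr_fun fun k => ?_
    simp only [ha, hg, pow_mul]
    push_cast
    norm_num
    rw [div_eq_mul_inv]
  have hao : HasSum (fun k : ℕ => a (2 * k + 1)) (-(π ^ 2 / 12)) := by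
    have := hS.mul_left (-(1 / 2))
    have e : (-(1 / 2) : ℝ) * (π ^ 2 / 6) = -(π ^ 2 / 12) := by ring
    rw [e] at this
    refine this.congr_fun fun k => ?_
    simp only [ha, hg, pow_succ, pow_mul]
    push_cast
    norm_num
    field_simp
    ring
  have := HasSum.even_add_odd hae hao
  have e : (π ^ 2 / 4) + -(π ^ 2 / 12) = π ^ 2 / 6 := by ring
  rwa [e] at this

lemma hasSumW {s : ℝ} (hs : 0 < s) :
    HasSum (fun n : ℕ => ((n : ℝ) + 1) * (-1) ^ n * Real.exp (-(((n : ℝ) + 1) * s)) * s ^ 2)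
      (s ^ 2 * Real.exp (-s) / (1 + Real.exp (-s)) ^ 2) := by
  set r : ℝ := -Real.exp (-s) with hr_def
  have hre : Real.exp (-s) < 1 := Real.exp_lt_one_iff.mpr (by linarith)
  have hr : ‖r‖ < 1 := by
    rw [hr_def, norm_neg, Real.norm_eq_abs, abs_of_pos (Real.exp_pos _)]
    exact hre
  have h1 := hasSum_coe_mul_geometric_of_norm_lt_one hr
  have h2 := hasSum_geometric_of_norm_lt_one hr
  have h3 := (h1.add h2).mul_left (s ^ 2 * Real.exp (-s))
  have hne : (1 : ℝ) - r ≠ 0 := by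
    have : (0:ℝ) < 1 - r := by
      rw [hr_def]; have := Real.exp_pos (-s); linarith
    linarith
  have hval : s ^ 2 * Real.exp (-s) * (r / (1 - r) ^ 2 + (1 - r) ⁻¹)
      = s ^ 2 * Real.exp (-s) / (1 + Real.exp (-s)) ^ 2 := by
    rw [hr_def, sub_neg_eq_add]
    have : (1:ℝ) + Real.exp (-s) ≠ 0 := by positivity
    field_simp
    ring
  rw [← hval]
  refine h3.congr_fun fun n => ?_
  have hexp : Real.exp (-(((n : ℝ) + 1) * s)) = Real.exp (-s) ^ (n + 1) := by
    rw [← Real.exp_nat_mul]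
    congr 1
    push_cast
    ring
  rw [hexp, hr_def]
  rw [neg_pow]
  push_cast
  ring

lemma central :
    ∫ s in Set.Ioi (0:ℝ), s ^ 2 * Real.exp (-s) / (1 + Real.exp (-s)) ^ 2 = π ^ 2 / 6 := by
  set F : ℕ → ℝ → ℝ :=
    fun n s => ((n : ℝ) + 1) * (-1) ^ n * Real.exp (-(((n : ℝ) + 1) * s)) * s ^ 2 with hF
  have hpos : ∀ n : ℕ, (0:ℝ) < (n : ℝ) + 1 := fun n => by positivity
  have hFint : ∀ n, Integrable (F n) (volume.restrict (Set.Ioi 0)) := by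
    intro n
    have := (expint_integrable ((n : ℝ) + 1) (hpos n)).const_mul (((n : ℝ) + 1) * (-1) ^ n)
    refine this.congr (Filter.EventuallyEq.of_eq ?_)
    funext s
    rw [hF]
    ring
  have hFnorm : ∀ n, ∫ s in Set.Ioi (0:ℝ), ‖F n s‖ = 2 / ((n : ℝ) + 1) ^ 2 := by
    intro n
    have heq : ∀ s : ℝ, ‖F n s‖ = ((n : ℝ) + 1) * (s ^ 2 * Real.exp (-(((n : ℝ) + 1) * s))) := by
      intro s
      rw [hF, Real.norm_eq_abs, abs_mul, abs_mul, abs_mul]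
      rw [abs_of_pos (hpos n), abs_pow, abs_neg, abs_one, one_pow, mul_one,
        abs_of_pos (Real.exp_pos _), abs_of_nonneg (sq_nonneg s)]
      ring
    simp_rw [heq]
    rw [integral_const_mul, expint_val _ (hpos n)]
    field_simp
  have hsummable : Summable fun n : ℕ => ∫ s in Set.Ioi (0:ℝ), ‖F n s‖ := by
    simp_rw [hFnorm]
    have := basel_shift.summable.mul_left 2
    refine this.congr fun n => ?_
    rw [mul_div_assoc'] -- 2 * (1/x) = 2/x
    ring_nf
  have hkey := hasSum_integral_of_summable_integral_norm hFint hsummable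
  have hFval : ∀ n, ∫ s in Set.Ioi (0:ℝ), F n s = (-1) ^ n * (2 / ((n : ℝ) + 1) ^ 2) := by
    intro n
    have : ∀ s : ℝ, F n s = (((n : ℝ) + 1) * (-1) ^ n) * (s ^ 2 * Real.exp (-(((n : ℝ) + 1) * s))) := by
      intro s; rw [hF]; ring
    simp_rw [this]
    rw [integral_const_mul, expint_val _ (hpos n)]
    field_simp
  have htsum : ∫ s in Set.Ioi (0:ℝ), (∑' n, F n s)
      = ∫ s in Set.Ioi (0:ℝ), s ^ 2 * Real.exp (-s) / (1 + Real.exp (-s)) ^ 2 := by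
    refine setIntegral_congr_fun measurableSet_Ioi fun s hs => ?_
    exact (hasSumW hs).tsum_eq
  rw [htsum] at hkey
  simp_rw [hFval] at hkey
  exact hkey.unique eta_two

noncomputable def W : ℝ → ℝ := fun s => s ^ 2 * Real.exp (-s) / (1 + Real.exp (-s)) ^ 2

lemma W_cont : Continuous W := by
  apply Continuous.div
  · exact (continuous_pow 2).mul (Real.continuous_exp.comp continuous_neg)
  · exact ((continuous_const.add (Real.continuous_exp.comp continuous_neg)).pow 2)
  · intro s
    positivity

lemma W_integrable : IntegrableOn W (Set.Ioi 0) := by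
  have h1 : IntegrableOn (fun s : ℝ => s ^ 2 * Real.exp (-(1 * s))) (Set.Ioi 0) :=
    expint_integrable 1 one_pos
  have h1' : IntegrableOn (fun s : ℝ => s ^ 2 * Real.exp (-s)) (Set.Ioi 0) := by
    simpa using h1
  refine h1'.mono' W_cont.aestronglyMeasurable.restrict (ae_of_all _ fun s => ?_)
  rw [Real.norm_eq_abs, W]
  have he := Real.exp_pos (-s)
  have hd : (1:ℝ) ≤ (1 + Real.exp (-s)) ^ 2 := by nlinarith
  rw [abs_of_nonneg (by positivity)]
  calc s ^ 2 * Real.exp (-s) / (1 + Real.exp (-s)) ^ 2 ≤ s ^ 2 * Real.exp (-s) / 1 := by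
        apply div_le_div_of_nonneg_left (by positivity) one_pos hd
    _ = s ^ 2 * Real.exp (-s) := by ring

noncomputable def g2 : ℝ → ℝ := fun t => (Real.log t) ^ 2 / (1 + t) ^ 2

lemma img1 : (fun s : ℝ => Real.exp (-s)) '' Set.Ioi 0 = Set.Ioo 0 1 := by
  ext t
  constructor
  · rintro ⟨s, hs, rfl⟩
    exact ⟨Real.exp_pos _, Real.exp_lt_one_iff.mpr (by simpa using hs)⟩
  · rintro ⟨h0, h1⟩
    exact ⟨-Real.log t, by simpa using Real.log_neg h0 h1, by simp [Real.exp_log h0]⟩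

lemma img2 : (fun s : ℝ => Real.exp s) '' Set.Ioi 0 = Set.Ioi 1 := by
  ext t
  constructor
  · rintro ⟨s, hs, rfl⟩
    exact Real.one_lt_exp_iff.mpr hs
  · intro h1
    have h0 : 0 < t := lt_trans one_pos h1
    exact ⟨Real.log t, Real.log_pos h1, Real.exp_log h0⟩

lemma half1 : ∫ t in Set.Ioo (0:ℝ) 1, g2 t = ∫ s in Set.Ioi (0:ℝ), W s := by
  have hder : ∀ s ∈ Set.Ioi (0:ℝ), HasDerivWithinAt (fun s : ℝ => Real.exp (-s))
      (-Real.exp (-s)) (Set.Ioi 0) s := by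
    intro s _
    have : HasDerivAt (fun s : ℝ => Real.exp (-s)) (Real.exp (-s) * (-1)) s :=
      (Real.hasDerivAt_exp _).comp s ((hasDerivAt_id s).neg)
    simpa [mul_comm] using this.hasDerivWithinAt
  have hinj : Set.InjOn (fun s : ℝ => Real.exp (-s)) (Set.Ioi 0) := by
    intro a _ b _ h
    have := Real.exp_injective h
    linarith [neg_injective this]
  have := integral_image_eq_integral_abs_deriv_smul measurableSet_Ioi hder hinj g2
  rw [img1] at this
  rw [this]
  refine setIntegral_congr_fun measurableSet_Ioi fun s hs => ?_
  rw [smul_eq_mul, g2, W]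
  rw [abs_neg, abs_of_pos (Real.exp_pos _), Real.log_exp]
  ring

lemma half1_int : IntegrableOn g2 (Set.Ioo 0 1) := by
  have hder : ∀ s ∈ Set.Ioi (0:ℝ), HasDerivWithinAt (fun s : ℝ => Real.exp (-s))
      (-Real.exp (-s)) (Set.Ioi 0) s := by
    intro s _
    have : HasDerivAt (fun s : ℝ => Real.exp (-s)) (Real.exp (-s) * (-1)) s :=
      (Real.hasDerivAt_exp _).comp s ((hasDerivAt_id s).neg)
    simpa [mul_comm] using this.hasDerivWithinAt
  have hinj : Set.InjOn (fun s : ℝ => Real.exp (-s)) (Set.Ioi 0) := by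
    intro a _ b _ h
    have := Real.exp_injective h
    linarith [neg_injective this]
  have := integrableOn_image_iff_integrableOn_abs_deriv_smul measurableSet_Ioi hder hinj g2
  rw [img1] at this
  rw [this]
  refine W_integrable.congr_fun (fun s hs => ?_) measurableSet_Ioi
  rw [smul_eq_mul, g2, W]
  rw [abs_neg, abs_of_pos (Real.exp_pos _), Real.log_exp]
  ring

lemma exp_half_eq (s : ℝ) : s ^ 2 * Real.exp s / (1 + Real.exp s) ^ 2 = W s := by
  rw [W, Real.exp_neg]
  have h1 : (1:ℝ) + Real.exp s ≠ 0 := by positivity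
  have h2 : Real.exp s ≠ 0 := Real.exp_ne_zero s
  have h3 : (1:ℝ) + (Real.exp s)⁻¹ ≠ 0 := by positivity
  field_simp
  ring

lemma half2 : ∫ t in Set.Ioi (1:ℝ), g2 t = ∫ s in Set.Ioi (0:ℝ), W s := by
  have hder : ∀ s ∈ Set.Ioi (0:ℝ), HasDerivWithinAt (fun s : ℝ => Real.exp s)
      (Real.exp s) (Set.Ioi 0) s := fun s _ => (Real.hasDerivAt_exp s).hasDerivWithinAt
  have hinj : Set.InjOn (fun s : ℝ => Real.exp s) (Set.Ioi 0) :=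
    fun a _ b _ h => Real.exp_injective h
  have := integral_image_eq_integral_abs_deriv_smul measurableSet_Ioi hder hinj g2
  rw [img2] at this
  rw [this]
  refine setIntegral_congr_fun measurableSet_Ioi fun s hs => ?_
  rw [smul_eq_mul, g2, abs_of_pos (Real.exp_pos _), Real.log_exp, ← exp_half_eq]
  ring

lemma half2_int : IntegrableOn g2 (Set.Ioi 1) := by
  have hder : ∀ s ∈ Set.Ioi (0:ℝ), HasDerivWithinAt (fun s : ℝ => Real.exp s)
      (Real.exp s) (Set.Ioi 0) s := fun s _ => (Real.hasDerivAt_exp s).hasDerivWithinAt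
  have hinj : Set.InjOn (fun s : ℝ => Real.exp s) (Set.Ioi 0) :=
    fun a _ b _ h => Real.exp_injective h
  have := integrableOn_image_iff_integrableOn_abs_deriv_smul measurableSet_Ioi hder hinj g2
  rw [img2] at this
  rw [this]
  refine W_integrable.congr_fun (fun s hs => ?_) measurableSet_Ioi
  rw [smul_eq_mul, g2, abs_of_pos (Real.exp_pos _), Real.log_exp, ← exp_half_eq]
  ring

lemma ioi_split : Set.Ioi (0:ℝ) = Set.Ioo 0 1 ∪ Set.Ici 1 := by
  ext t
  simp only [Set.mem_Ioi, Set.mem_union, Set.mem_Ioo, Set.mem_Ici]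
  constructor
  · intro h
    rcases lt_or_ge t 1 with h1 | h1
    · exact Or.inl ⟨h, h1⟩
    · exact Or.inr h1
  · rintro (⟨h, _⟩ | h) <;> linarith

lemma g2_int_Ici : IntegrableOn g2 (Set.Ici 1) := by
  rw [integrableOn_Ici_iff_integrableOn_Ioi]
  exact half2_int

lemma g2_integrable : IntegrableOn g2 (Set.Ioi 0) := by
  rw [ioi_split]
  exact half1_int.union g2_int_Ici

lemma g2_val : ∫ t in Set.Ioi (0:ℝ), g2 t = π ^ 2 / 3 := by
  rw [ioi_split]
  rw [setIntegral_union ?_ measurableSet_Ici half1_int g2_int_Ici]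
  · rw [integral_Ici_eq_integral_Ioi, half1, half2]
    have : ∫ s in Set.Ioi (0:ℝ), W s = π ^ 2 / 6 := central
    rw [this]
    ring
  · rw [Set.disjoint_left]
    rintro t ⟨_, h1⟩ h2
    exact absurd h2 (not_le.mpr h1)


noncomputable def g0 : ℝ → ℝ := fun t => 1 / (1 + t) ^ 2
noncomputable def g1 : ℝ → ℝ := fun t => Real.log t / (1 + t) ^ 2

lemma g0_deriv (t : ℝ) (ht : 0 < t) :
    HasDerivAt (fun t : ℝ => -(1 + t)⁻¹) (g0 t) t := by
  have h1 : (1 + t) ≠ 0 := by positivity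
  have : HasDerivAt (fun t : ℝ => 1 + t) 1 t := (hasDerivAt_id t).const_add 1
  have h2 := (this.inv h1).neg
  rw [g0]
  refine h2.congr_deriv ?_
  field_simp

lemma g0_tendsto : Tendsto (fun t : ℝ => -(1 + t)⁻¹) atTop (nhds 0) := by
  have h : Tendsto (fun t : ℝ => 1 + t) atTop atTop := tendsto_atTop_add_const_left _ 1 tendsto_id
  simpa using (h.inv_tendsto_atTop).neg

lemma g0_integrable : IntegrableOn g0 (Set.Ioi 0) := by
  refine integrableOn_Ioi_deriv_of_nonneg ?_ (fun t ht => g0_deriv t ht) ?_ g0_tendsto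
  · exact (((continuous_const.add continuous_id).continuousAt.inv₀ (by norm_num)).neg).continuousWithinAt
  · intro t ht
    rw [g0]
    positivity

lemma g0_val : ∫ t in Set.Ioi (0:ℝ), g0 t = 1 := by
  rw [integral_Ioi_of_hasDerivAt_of_tendsto ?_ (fun t ht => g0_deriv t ht) g0_integrable g0_tendsto]
  · norm_num
  · exact (((continuous_const.add continuous_id).continuousAt.inv₀ (by norm_num)).neg).continuousWithinAt

lemma g1_integrable : IntegrableOn g1 (Set.Ioi 0) := by
  have hmeas : AEStronglyMeasurable g1 (volume.restrict (Set.Ioi 0)) := by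
    refine (Measurable.aestronglyMeasurable ?_).restrict
    exact Real.measurable_log.div (((measurable_const.add measurable_id).pow_const 2))
  refine (g0_integrable.add g2_integrable).mono' hmeas (ae_restrict_of_forall_mem measurableSet_Ioi fun t ht => ?_)
  have h1 : (0:ℝ) < (1 + t) ^ 2 := by
    have : (0:ℝ) < t := ht
    positivity
  simp only [g1, g0, g2, Pi.add_apply, Real.norm_eq_abs]
  rw [abs_div, abs_of_pos h1, ← add_div]
  gcongr
  nlinarith [sq_nonneg (|Real.log t| - 1), sq_abs (Real.log t)]

noncomputable def G : ℝ → ℝ := fun t => (t * Real.log t) * (1 + t)⁻¹ - Real.log (1 + t)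

lemma G_deriv (t : ℝ) (ht : t ∈ Set.Ioi (0:ℝ)) : HasDerivAt G (g1 t) t := by
  have ht0 : (0:ℝ) < t := ht
  have h1 : (1 + t) ≠ 0 := by positivity
  have hml : HasDerivAt (fun t : ℝ => t * Real.log t) (Real.log t + 1) t :=
    Real.hasDerivAt_mul_log (ne_of_gt ht0)
  have hc : HasDerivAt (fun t : ℝ => 1 + t) 1 t := (hasDerivAt_id t).const_add 1
  have hinv : HasDerivAt (fun t : ℝ => (1 + t)⁻¹) (-1 / (1 + t) ^ 2) t := hc.inv h1
  have hlog : HasDerivAt (fun t : ℝ => Real.log (1 + t)) ((1 + t)⁻¹ * 1) t :=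
    (Real.hasDerivAt_log h1).comp t hc
  have := (hml.mul hinv).sub hlog
  unfold G
  refine this.congr_deriv ?_
  rw [g1]
  field_simp
  ring

lemma G_cont0 : ContinuousWithinAt G (Set.Ici 0) 0 := by
  apply ContinuousAt.continuousWithinAt
  refine ContinuousAt.sub (ContinuousAt.mul ?_ ?_) ?_
  · exact Real.continuous_mul_log.continuousAt
  · exact (continuous_const.add continuous_id).continuousAt.inv₀ (by norm_num)
  · exact (Real.continuousAt_log (by norm_num)).comp (continuous_const.add continuous_id).continuousAt

lemma G_tendsto : Tendsto G atTop (nhds 0) := by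
  have h1 : Tendsto (fun t : ℝ => t / (1 + t)) atTop (nhds 1) := by
    have h : Tendsto (fun t : ℝ => 1 - (1 + t)⁻¹) atTop (nhds 1) := by
      have := ((tendsto_atTop_add_const_left _ 1 (tendsto_id (α := ℝ))).inv_tendsto_atTop).const_sub 1
      simpa using this
    refine h.congr' ?_
    filter_upwards [eventually_gt_atTop (0:ℝ)] with t ht
    have : (1 + t) ≠ 0 := by positivity
    field_simp
    ring
  have h2 : Tendsto (fun t : ℝ => Real.log (t / (1 + t))) atTop (nhds 0) := by
    have := (Real.continuousAt_log (x := 1) one_ne_zero).tendsto.comp h1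
    simpa [Function.comp_def] using this
  have h3 : Tendsto (fun t : ℝ => Real.log t * (1 + t)⁻¹) atTop (nhds 0) := by
    have := Real.tendsto_pow_log_div_mul_add_atTop 1 1 1 one_ne_zero
    refine this.congr' ?_
    filter_upwards [eventually_gt_atTop (0:ℝ)] with t ht
    rw [pow_one, one_mul, div_eq_mul_inv, add_comm]
  have := h2.sub h3
  rw [sub_zero] at this
  refine this.congr' ?_
  filter_upwards [eventually_gt_atTop (0:ℝ)] with t ht
  have h1t : (1 + t) ≠ 0 := by positivity
  rw [G, Real.log_div (ne_of_gt ht) h1t]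
  field_simp
  ring

lemma g1_val : ∫ t in Set.Ioi (0:ℝ), g1 t = 0 := by
  rw [integral_Ioi_of_hasDerivAt_of_tendsto G_cont0 G_deriv g1_integrable G_tendsto]
  rw [G]
  simp


theorem stmt_9 (x : ℝ) (hx : 0 < x) :
    ∫ u in Set.Ioi (0:ℝ), x * (Real.log u) ^ 2 / (1 + u * x) ^ 2
      = (Real.log x) ^ 2 + Real.pi ^ 2 / 3 := by
  set c := Real.log x with hc
  have step1 : ∫ u in Set.Ioi (0:ℝ), x * (Real.log u) ^ 2 / (1 + u * x) ^ 2
      = ∫ u in Set.Ioi (0:ℝ), x * (Real.log (u * x) - c) ^ 2 / (1 + u * x) ^ 2 := by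
    refine setIntegral_congr_fun measurableSet_Ioi fun u hu => ?_
    have hu0 : (0:ℝ) < u := hu
    rw [Real.log_mul (ne_of_gt hu0) (ne_of_gt hx), hc]
    ring_nf
  rw [step1]
  have step2 : ∫ u in Set.Ioi (0:ℝ), x * (Real.log (u * x) - c) ^ 2 / (1 + u * x) ^ 2
      = x⁻¹ • ∫ t in Set.Ioi ((0:ℝ) * x), x * (Real.log t - c) ^ 2 / (1 + t) ^ 2 :=
    integral_comp_mul_right_Ioi (fun t => x * (Real.log t - c) ^ 2 / (1 + t) ^ 2) 0 hx
  rw [step2, zero_mul, smul_eq_mul]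
  have step3 : ∫ t in Set.Ioi ((0:ℝ)), x * (Real.log t - c) ^ 2 / (1 + t) ^ 2
      = x * ∫ t in Set.Ioi ((0:ℝ)), (Real.log t - c) ^ 2 / (1 + t) ^ 2 := by
    rw [← integral_const_mul]
    congr 1
    funext t
    ring
  rw [step3, ← mul_assoc, inv_mul_cancel₀ (ne_of_gt hx), one_mul]
  have step4 : ∫ t in Set.Ioi ((0:ℝ)), (Real.log t - c) ^ 2 / (1 + t) ^ 2
      = ∫ t in Set.Ioi ((0:ℝ)), (g2 t - (2 * c) * g1 t + c ^ 2 * g0 t) := by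
    congr 1
    funext t
    rw [g2, g1, g0]
    ring
  rw [step4]
  have h1 : Integrable (fun t : ℝ => g2 t - 2 * c * g1 t) (volume.restrict (Set.Ioi 0)) :=
    g2_integrable.sub (g1_integrable.const_mul (2 * c))
  have h2 : Integrable (fun t : ℝ => c ^ 2 * g0 t) (volume.restrict (Set.Ioi 0)) :=
    g0_integrable.const_mul (c ^ 2)
  have h3 : Integrable (fun t : ℝ => 2 * c * g1 t) (volume.restrict (Set.Ioi 0)) :=
    g1_integrable.const_mul (2 * c)
  rw [integral_add h1 h2, integral_sub g2_integrable h3,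
    integral_const_mul, integral_const_mul, g2_val, g1_val, g0_val]
  ring
end

section
/- Let μ be a Borel probability measure on [0,∞) with μ({0}) = 0 that is not a Dirac measure, and define ψ(u) = ∫ (tu)/(1-tu) dμ(t) for u < 0. Then for every u < 0, the quantity ψ(u)(ψ(u)+1) - u·ψ'(u) equals -(u²/2)·∫∫ (s-t)²/((1-us)²(1-ut)²) dμ(s)dμ(t), which is strictly negative. -/
open MeasureTheory

/-- A probability measure that gives full mass to a point is the Dirac measure. -/
lemma aux_eq_dirac (μ : Measure ℝ) [IsProbabilityMeasure μ] (c : ℝ)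
    (h : ∀ᵐ x ∂μ, x = c) : μ = Measure.dirac c := by
  have hcompl : μ ({c} : Set ℝ)ᶜ = 0 := by
    have h0 : μ {x : ℝ | ¬ x = c} = 0 := h
    have hset : ({c} : Set ℝ)ᶜ = {x : ℝ | ¬ x = c} := by ext x; simp
    rw [hset]; exact h0
  have hc : μ {c} = 1 := (prob_compl_eq_zero_iff (measurableSet_singleton c)).mp hcompl
  ext s hs
  rw [Measure.dirac_apply' _ hs]
  by_cases hcs : c ∈ s
  · rw [Set.indicator_of_mem hcs]
    have h1 : μ s ≤ 1 := prob_le_one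
    have h2 : (1:ENNReal) ≤ μ s := hc ▸ measure_mono (Set.singleton_subset_iff.mpr hcs)
    simpa using le_antisymm h1 h2
  · rw [Set.indicator_of_notMem hcs]
    exact measure_mono_null (Set.subset_compl_singleton_iff.mpr hcs) hcompl

/-- Integral of a quadratic expression `a - b f + f²`. -/
lemma aux_integral_quad (μ : Measure ℝ) [IsProbabilityMeasure μ] (f : ℝ → ℝ)
    (hf : Integrable f μ) (hf2 : Integrable (fun t => f t ^ 2) μ) (a b : ℝ) :
    ∫ t, (a - b * f t + f t ^ 2) ∂μ
      = a - b * (∫ t, f t ∂μ) + ∫ t, f t ^ 2 ∂μ := by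
  have h1 : Integrable (fun t => a - b * f t) μ :=
    (integrable_const a).sub (hf.const_mul b)
  rw [integral_add h1 hf2, integral_sub (integrable_const a) (hf.const_mul b),
    integral_const_mul, integral_const]
  simp

/-- Integral of a quadratic expression `f² - b f + c`. -/
lemma aux_integral_quad2 (μ : Measure ℝ) [IsProbabilityMeasure μ] (f : ℝ → ℝ)
    (hf : Integrable f μ) (hf2 : Integrable (fun t => f t ^ 2) μ) (b c : ℝ) :
    ∫ t, (f t ^ 2 - b * f t + c) ∂μ
      = (∫ t, f t ^ 2 ∂μ) - b * (∫ t, f t ∂μ) + c := by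
  have h1 : Integrable (fun t => f t ^ 2 - b * f t) μ :=
    hf2.sub (hf.const_mul b)
  rw [integral_add h1 (integrable_const c), integral_sub hf2 (hf.const_mul b),
    integral_const_mul, integral_const]
  simp

theorem stmt_15 (μ : Measure ℝ) [IsProbabilityMeasure μ]
    (hsupp : μ (Set.Ioi (0:ℝ))ᶜ = 0)
    (hnotdirac : ∀ c : ℝ, μ ≠ Measure.dirac c)
    (ψ ψ' : ℝ → ℝ)
    (hψ : ∀ u < (0:ℝ), ψ u = ∫ t, t * u / (1 - t * u) ∂μ)
    (hψ' : ∀ u < (0:ℝ), ψ' u = ∫ t, t / (1 - u * t) ^ 2 ∂μ) :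
    ∀ u < (0:ℝ),
      ψ u * (ψ u + 1) - u * ψ' u
          = -(u ^ 2 / 2) *
              ∫ s, ∫ t, (s - t) ^ 2 / ((1 - u * s) ^ 2 * (1 - u * t) ^ 2) ∂μ ∂μ ∧
        ψ u * (ψ u + 1) - u * ψ' u < 0 := by
  intro u hu
  have hnegu : (0:ℝ) < -u := neg_pos.mpr hu
  set g : ℝ → ℝ := fun t => t / (1 - u * t) with hgdef
  have hae : ∀ᵐ t ∂μ, t ∈ Set.Ioi (0:ℝ) := by
    rw [ae_iff]
    exact hsupp
  have hden : ∀ t : ℝ, t ∈ Set.Ioi (0:ℝ) → 0 < 1 - u * t := by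
    intro t ht
    have : u * t < 0 := mul_neg_of_neg_of_pos hu ht
    linarith
  have hg_nonneg : ∀ t : ℝ, t ∈ Set.Ioi (0:ℝ) → 0 ≤ g t := by
    intro t ht
    exact div_nonneg (le_of_lt ht) (le_of_lt (hden t ht))
  have hg_bound : ∀ t : ℝ, t ∈ Set.Ioi (0:ℝ) → g t ≤ 1 / (-u) := by
    intro t ht
    have h1 : 0 < -u * t := mul_pos hnegu ht
    have h2 : -u * t ≤ 1 - u * t := by linarith
    have h3 : t / (1 - u * t) ≤ t / (-u * t) :=
      div_le_div_of_nonneg_left (le_of_lt ht) h1 h2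
    have h4 : t / (-u * t) = 1 / (-u) := by
      rw [div_eq_div_iff (by positivity) (ne_of_gt hnegu)]
      ring
    calc g t ≤ t / (-u * t) := h3
      _ = 1 / (-u) := h4
  have hg_meas : Measurable g :=
    measurable_id.div ((measurable_const.sub (measurable_const.mul measurable_id)))
  have hg_norm : ∀ᵐ t ∂μ, ‖g t‖ ≤ 1 / (-u) := by
    filter_upwards [hae] with t ht
    rw [Real.norm_eq_abs, abs_of_nonneg (hg_nonneg t ht)]
    exact hg_bound t ht
  have hg_int : Integrable g μ :=
    ⟨hg_meas.aestronglyMeasurable, HasFiniteIntegral.of_bounded hg_norm⟩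
  have hg2_int : Integrable (fun t => g t ^ 2) μ := by
    refine ⟨(hg_meas.pow_const 2).aestronglyMeasurable, HasFiniteIntegral.of_bounded
      (C := (1 / (-u)) ^ 2) ?_⟩
    filter_upwards [hg_norm] with t ht
    rw [Real.norm_eq_abs, abs_pow]
    exact pow_le_pow_left₀ (abs_nonneg _) (by simpa using ht) 2
  set I : ℝ := ∫ t, g t ∂μ with hI
  set J : ℝ := ∫ t, g t ^ 2 ∂μ with hJ
  -- ψ u = u * I
  have hpsi : ψ u = u * I := by
    rw [hψ u hu, hI, ← integral_const_mul]
    congr 1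
    funext t
    show t * u / (1 - t * u) = u * (t / (1 - u * t))
    rw [mul_comm t u, mul_div_assoc]
  -- ψ' u = I + u * J
  have hpsi' : ψ' u = I + u * J := by
    rw [hψ' u hu]
    have h1 : ∫ t, t / (1 - u * t) ^ 2 ∂μ = ∫ t, (g t + u * g t ^ 2) ∂μ := by
      apply integral_congr_ae
      filter_upwards [hae] with t ht
      have hd' : (1 - u * t) ≠ 0 := ne_of_gt (hden t ht)
      show t / (1 - u * t) ^ 2 = t / (1 - u * t) + u * (t / (1 - u * t)) ^ 2
      field_simp
      ring
    rw [h1, integral_add hg_int (hg2_int.const_mul u), integral_const_mul]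
  -- the double integral equals 2*(J - I^2)
  have hdouble :
      (∫ s, ∫ t, (s - t) ^ 2 / ((1 - u * s) ^ 2 * (1 - u * t) ^ 2) ∂μ ∂μ)
        = 2 * (J - I ^ 2) := by
    have hinner : ∀ᵐ s ∂μ,
        (∫ t, (s - t) ^ 2 / ((1 - u * s) ^ 2 * (1 - u * t) ^ 2) ∂μ)
          = g s ^ 2 - (2 * I) * g s + J := by
      filter_upwards [hae] with s hs
      have h1 : (∫ t, (s - t) ^ 2 / ((1 - u * s) ^ 2 * (1 - u * t) ^ 2) ∂μ)
          = ∫ t, (g s ^ 2 - (2 * g s) * g t + g t ^ 2) ∂μ := by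
        apply integral_congr_ae
        filter_upwards [hae] with t ht
        have hds' : (1 - u * s) ≠ 0 := ne_of_gt (hden s hs)
        have hdt' : (1 - u * t) ≠ 0 := ne_of_gt (hden t ht)
        show (s - t) ^ 2 / ((1 - u * s) ^ 2 * (1 - u * t) ^ 2)
            = (s / (1 - u * s)) ^ 2 - (2 * (s / (1 - u * s))) * (t / (1 - u * t))
              + (t / (1 - u * t)) ^ 2
        rw [show s - t = s * (1 - u * t) - t * (1 - u * s) by ring]
        generalize (1 - u * s) = a at *
        generalize (1 - u * t) = b at *
        field_simp
        ring
      rw [h1, aux_integral_quad μ g hg_int hg2_int _ _, ← hI, ← hJ]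
      ring
    rw [integral_congr_ae hinner, aux_integral_quad2 μ g hg_int hg2_int _ _, ← hI, ← hJ]
    ring
  -- variance identity
  have hvar : J - I ^ 2 = ∫ t, (g t - I) ^ 2 ∂μ := by
    have h1 : ∀ t, (g t - I) ^ 2 = g t ^ 2 - (2 * I) * g t + I ^ 2 := by
      intro t; ring
    simp only [h1]
    rw [aux_integral_quad2 μ g hg_int hg2_int _ _, ← hI, ← hJ]
    ring
  have hvar_int : Integrable (fun t => (g t - I) ^ 2) μ := by
    have h1 : (fun t => (g t - I) ^ 2) = fun t => g t ^ 2 - (2 * I) * g t + I ^ 2 := by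
      funext t; ring
    rw [h1]
    exact (hg2_int.sub (hg_int.const_mul (2 * I))).add (integrable_const _)
  -- strict positivity of the variance
  have hnn : 0 ≤ J - I ^ 2 := by
    rw [hvar]; exact integral_nonneg fun t => sq_nonneg _
  have hvar_pos : 0 < J - I ^ 2 := by
    rcases lt_or_eq_of_le hnn with h | h
    · exact h
    · exfalso
      have hzero : ∀ᵐ t ∂μ, (g t - I) ^ 2 = 0 := by
        have h2 := (integral_eq_zero_iff_of_nonneg
          (fun t => sq_nonneg (g t - I)) hvar_int).mp (by rw [← hvar, ← h])
        filter_upwards [h2] with t ht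
        simpa using ht
      have hgI : ∀ᵐ t ∂μ, g t = I ∧ t ∈ Set.Ioi (0:ℝ) := by
        filter_upwards [hzero, hae] with t ht ht'
        refine ⟨?_, ht'⟩
        nlinarith [sq_nonneg (g t - I)]
      have hne : (1 + u * I) ≠ 0 := by
        haveI : (ae μ).NeBot := ae_neBot.mpr (IsProbabilityMeasure.ne_zero μ)
        obtain ⟨t, htI, ht⟩ := hgI.exists
        have hd := hden t ht
        have hd' : (1 - u * t) ≠ 0 := ne_of_gt hd
        have h3 : 1 + u * I = 1 / (1 - u * t) := by
          rw [← htI]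
          show 1 + u * (t / (1 - u * t)) = 1 / (1 - u * t)
          field_simp
          ring
        rw [h3]
        positivity
      have hconst : ∀ᵐ t ∂μ, t = I / (1 + u * I) := by
        filter_upwards [hgI] with t htt
        obtain ⟨htI, ht⟩ := htt
        have hd' : (1 - u * t) ≠ 0 := ne_of_gt (hden t ht)
        have h1 : t = I * (1 - u * t) := by
          have h2 : g t * (1 - u * t) = t := by
            show (t / (1 - u * t)) * (1 - u * t) = t
            exact div_mul_cancel₀ t hd'
          rw [← htI]
          exact h2.symm
        rw [eq_div_iff hne]
        linear_combination h1
      exact hnotdirac _ (aux_eq_dirac μ _ hconst)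
  have hu2 : (0:ℝ) < u ^ 2 := by nlinarith
  constructor
  · rw [hpsi, hpsi', hdouble]
    ring
  · rw [hpsi, hpsi']
    nlinarith [mul_pos hu2 hvar_pos]
end

section
/- The function f(φ) = sin(φ)·sin(βφ)^β / sin((β+1)φ)^{β+1} is a strictly monotone bijection from the interval (0, π/(β+1)) onto (β^β/(β+1)^{β+1}, ∞), for every real β > 0. -/
open Real Set

lemma sinpos {a b φ : ℝ} (ha : 0 < a) (hab : a ≤ b) (hφ : φ ∈ Ioo 0 (π/b)) :
    0 < Real.sin (a*φ) := by
  have hb : 0 < b := lt_of_lt_of_le ha hab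
  apply Real.sin_pos_of_pos_of_lt_pi (mul_pos ha hφ.1)
  calc a*φ ≤ b*φ := by nlinarith [hφ.1]
    _ < π := by
      have := hφ.2
      rw [lt_div_iff₀ hb] at this; linarith

lemma upos {a b : ℝ} (ha : 0 < a) (hab : a < b) {φ : ℝ} (hφ : φ ∈ Ioo 0 (π/b)) :
    0 < a * Real.cos (a*φ) * Real.sin (b*φ) - b * Real.sin (a*φ) * Real.cos (b*φ) := by
  have hb : 0 < b := ha.trans hab
  set u : ℝ → ℝ := fun ψ => a * Real.cos (a*ψ) * Real.sin (b*ψ) - b * Real.sin (a*ψ) * Real.cos (b*ψ) with hu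
  have hder : ∀ x : ℝ, HasDerivAt u ((b^2 - a^2) * (Real.sin (a*x) * Real.sin (b*x))) x := by
    intro x
    have hax : HasDerivAt (fun y : ℝ => a*y) a x := by simpa using (hasDerivAt_id x).const_mul a
    have hbx : HasDerivAt (fun y : ℝ => b*y) b x := by simpa using (hasDerivAt_id x).const_mul b
    have h := ((hax.cos.const_mul a).mul hbx.sin).sub ((hax.sin.const_mul b).mul hbx.cos)
    exact h.congr_deriv (by ring)
  have hmono : StrictMonoOn u (Icc 0 (π/b)) := by
    apply strictMonoOn_of_deriv_pos (convex_Icc _ _)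
    · exact fun x _ => ((hder x).differentiableAt.continuousAt).continuousWithinAt
    · intro x hx
      rw [interior_Icc] at hx
      rw [(hder x).deriv]
      have h1 := sinpos ha hab.le hx
      have h2 := sinpos hb le_rfl hx
      have h3 : 0 < b^2 - a^2 := by nlinarith
      exact mul_pos h3 (mul_pos h1 h2)
  have h0 : (0:ℝ) ∈ Icc 0 (π/b) := ⟨le_rfl, by positivity⟩
  have hφ' : φ ∈ Icc 0 (π/b) := ⟨hφ.1.le, hφ.2.le⟩
  have := hmono h0 hφ' hφ.1
  simpa [hu] using this

lemma ratio_mono {a b : ℝ} (ha : 0 < a) (hab : a < b) :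
    StrictMonoOn (fun φ => Real.sin (a*φ) / Real.sin (b*φ)) (Ioo 0 (π/b)) := by
  have hb : 0 < b := ha.trans hab
  apply strictMonoOn_of_deriv_pos (convex_Ioo _ _)
  · apply ContinuousOn.div (by fun_prop) (by fun_prop)
    exact fun x hx => (sinpos hb le_rfl hx).ne'
  · intro x hx
    rw [interior_Ioo] at hx
    have hbx : Real.sin (b*x) ≠ 0 := (sinpos hb le_rfl hx).ne'
    have hax : HasDerivAt (fun y : ℝ => a*y) a x := by simpa using (hasDerivAt_id x).const_mul a
    have hbx' : HasDerivAt (fun y : ℝ => b*y) b x := by simpa using (hasDerivAt_id x).const_mul b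
    have h := (hax.sin.div hbx'.sin hbx)
    rw [show deriv (fun φ => Real.sin (a*φ) / Real.sin (b*φ)) x = _ from h.deriv]
    apply div_pos
    · have := upos ha hab hx
      nlinarith [this]
    · positivity

lemma sin_div_self_tendsto : Filter.Tendsto (fun x : ℝ => Real.sin x / x) (nhdsWithin 0 {(0:ℝ)}ᶜ) (nhds 1) := by
  have h := Real.hasDerivAt_sin 0
  rw [hasDerivAt_iff_tendsto_slope] at h
  simpa [slope_fun_def, Real.sin_zero, Real.cos_zero, sub_zero, div_eq_inv_mul] using h

lemma scaled_sin_tendsto {a : ℝ} (ha : 0 < a) :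
    Filter.Tendsto (fun φ : ℝ => Real.sin (a*φ) / (a*φ)) (nhdsWithin 0 (Ioi 0)) (nhds 1) := by
  apply sin_div_self_tendsto.comp
  rw [tendsto_nhdsWithin_iff]
  constructor
  · have : Filter.Tendsto (fun φ : ℝ => a*φ) (nhds 0) (nhds (a*0)) :=
      (continuous_const.mul continuous_id).tendsto 0
    rw [mul_zero] at this
    exact this.mono_left nhdsWithin_le_nhds
  · filter_upwards [self_mem_nhdsWithin] with φ (hφ : 0 < φ)
    simp only [Set.mem_compl_iff, Set.mem_singleton_iff]
    positivity

lemma ratio_tendsto {a b : ℝ} (ha : 0 < a) (hb : 0 < b) :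
    Filter.Tendsto (fun φ : ℝ => Real.sin (a*φ) / Real.sin (b*φ)) (nhdsWithin 0 (Ioi 0)) (nhds (a/b)) := by
  have Ha := scaled_sin_tendsto ha
  have Hb := scaled_sin_tendsto hb
  have H := (Ha.div Hb one_ne_zero).mul_const (a/b)
  rw [show (1:ℝ)/1 * (a/b) = a/b by norm_num] at H
  apply H.congr'
  filter_upwards [Ioo_mem_nhdsGT_of_mem (show (0:ℝ) ∈ Ico 0 (π/b) from ⟨le_rfl, by positivity⟩)] with φ hφ
  have h1 : φ ≠ 0 := hφ.1.ne'
  have h2 : Real.sin (b*φ) ≠ 0 := (sinpos hb le_rfl hφ).ne'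
  simp only [Pi.div_apply]
  field_simp

theorem stmt_18 (β : ℝ) (hβ : 0 < β) :
    StrictMonoOn
        (fun φ : ℝ => Real.sin φ * Real.sin (β * φ) ^ β / Real.sin ((β + 1) * φ) ^ (β + 1))
        (Set.Ioo 0 (Real.pi / (β + 1))) ∧
      Set.BijOn
        (fun φ : ℝ => Real.sin φ * Real.sin (β * φ) ^ β / Real.sin ((β + 1) * φ) ^ (β + 1))
        (Set.Ioo 0 (Real.pi / (β + 1)))
        (Set.Ioi (β ^ β / (β + 1) ^ (β + 1))) := by
  set b : ℝ := β + 1 with hbdef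
  have hb : 0 < b := by positivity
  have h1b : 1 < b := by simp [hbdef]; linarith
  have hβb : β < b := by simp [hbdef]
  set c : ℝ := π / b with hcdef
  have hc : 0 < c := div_pos Real.pi_pos hb
  set F : ℝ → ℝ := fun φ : ℝ => Real.sin φ * Real.sin (β * φ) ^ β / Real.sin (b * φ) ^ (β + 1) with hFdef
  have hs1 : ∀ φ ∈ Ioo 0 c, 0 < Real.sin φ := fun φ hφ => by
    simpa using sinpos one_pos h1b.le hφ
  have hsβ : ∀ φ ∈ Ioo 0 c, 0 < Real.sin (β*φ) := fun φ hφ => sinpos hβ hβb.le hφ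
  have hsb : ∀ φ ∈ Ioo 0 c, 0 < Real.sin (b*φ) := fun φ hφ => sinpos hb le_rfl hφ
  -- rewrite of F as product
  have key : ∀ φ ∈ Ioo 0 c, F φ
      = (Real.sin φ / Real.sin (b*φ)) * (Real.sin (β*φ)/Real.sin (b*φ))^β := by
    intro φ hφ
    have h2 := (hsβ φ hφ)
    have h3 := (hsb φ hφ)
    rw [hFdef]
    simp only
    rw [Real.div_rpow h2.le h3.le, Real.rpow_add h3, Real.rpow_one]
    rw [div_mul_div_comm, mul_comm (Real.sin (b*φ) ^ β) (Real.sin (b*φ)), mul_comm (Real.sin (b*φ)) (Real.sin (b*φ) ^ β)]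
  -- strict monotonicity
  have kmono : StrictMonoOn (fun φ => Real.sin φ / Real.sin (b*φ)) (Ioo 0 c) := by
    have := ratio_mono one_pos h1b
    simpa using this
  have hmono : StrictMonoOn (fun φ => Real.sin (β*φ) / Real.sin (b*φ)) (Ioo 0 c) :=
    ratio_mono hβ hβb
  have Fmono : StrictMonoOn F (Ioo 0 c) := by
    intro x hx y hy hxy
    rw [key x hx, key y hy]
    have hk := kmono hx hy hxy
    have hh : (Real.sin (β*x)/Real.sin (b*x))^β < (Real.sin (β*y)/Real.sin (b*y))^β :=
      Real.rpow_lt_rpow (by have := hsβ x hx; have := hsb x hx; positivity) (hmono hx hy hxy) hβ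
    exact mul_lt_mul'' hk hh (by have := hs1 x hx; have := hsb x hx; positivity)
      (Real.rpow_nonneg (by have := hsβ x hx; have := hsb x hx; positivity) β)
  -- continuity
  have Fcont : ContinuousOn F (Ioo 0 c) := by
    apply ContinuousOn.div
    · exact (Real.continuous_sin.mul ((Real.continuous_sin.comp
        (continuous_const.mul continuous_id)).rpow_const (fun x => Or.inr hβ.le))).continuousOn
    · exact ((Real.continuous_sin.comp
        (continuous_const.mul continuous_id)).rpow_const (fun x => Or.inr (by linarith))).continuousOn
    · exact fun x hx => (Real.rpow_pos_of_pos (hsb x hx) _).ne'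
  -- value of the limit at 0
  have hL : β^β/b^b = (1/b) * (β/b)^β := by
    have hbb : b ^ b = b ^ β * b := by
      rw [hbdef, Real.rpow_add (by linarith : (0:ℝ) < β + 1), Real.rpow_one]
    rw [hbb, Real.div_rpow hβ.le hb.le]
    field_simp
  -- limit at 0
  have Ftend0 : Filter.Tendsto F (nhdsWithin 0 (Ioo 0 c)) (nhds (β^β/b^b)) := by
    have k0 : Filter.Tendsto (fun φ => Real.sin φ / Real.sin (b*φ)) (nhdsWithin 0 (Ioi 0)) (nhds (1/b)) := by
      simpa using ratio_tendsto one_pos hb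
    have h0 := ratio_tendsto hβ hb
    have g0 := k0.mul (h0.rpow_const (Or.inr hβ.le))
    have g0' := g0.mono_left (nhdsWithin_mono 0 (Set.Ioo_subset_Ioi_self : Ioo (0:ℝ) c ⊆ Ioi 0))
    rw [hL]
    apply g0'.congr'
    filter_upwards [self_mem_nhdsWithin] with φ hφ
    exact (key φ hφ).symm
  -- limit at c
  have FtendTop : Filter.Tendsto F (nhdsWithin c (Ioo 0 c)) Filter.atTop := by
    have hcπ : c < π := by
      rw [hcdef]; exact div_lt_self Real.pi_pos h1b
    have hsc : 0 < Real.sin c := Real.sin_pos_of_pos_of_lt_pi hc hcπ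
    have hsβc : 0 < Real.sin (β*c) := by
      apply Real.sin_pos_of_pos_of_lt_pi (by positivity)
      calc β * c < b * c := by nlinarith
        _ = π := by rw [hcdef]; field_simp
    have hNcont : Continuous (fun φ : ℝ => Real.sin φ * Real.sin (β*φ)^β) :=
      Real.continuous_sin.mul ((Real.continuous_sin.comp
        (continuous_const.mul continuous_id)).rpow_const (fun x => Or.inr hβ.le))
    have hN : Filter.Tendsto (fun φ : ℝ => Real.sin φ * Real.sin (β*φ)^β)
        (nhdsWithin c (Ioo 0 c)) (nhds (Real.sin c * Real.sin (β*c)^β)) :=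
      (hNcont.tendsto c).mono_left nhdsWithin_le_nhds
    have hNpos : 0 < Real.sin c * Real.sin (β*c)^β := by positivity
    have hD : Filter.Tendsto (fun φ : ℝ => Real.sin (b*φ)^(β+1))
        (nhdsWithin c (Ioo 0 c)) (nhdsWithin 0 (Ioi 0)) := by
      rw [tendsto_nhdsWithin_iff]
      constructor
      · have hDc : Continuous (fun φ : ℝ => Real.sin (b*φ)^(β+1)) :=
          (Real.continuous_sin.comp (continuous_const.mul continuous_id)).rpow_const
            (fun x => Or.inr (by linarith))
        have := (hDc.tendsto c).mono_left (nhdsWithin_le_nhds (s := Ioo 0 c))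
        have hbc : b * c = π := by rw [hcdef]; field_simp
        simpa [hbc, Real.sin_pi, Real.zero_rpow (by linarith : β + 1 ≠ 0)] using this
      · filter_upwards [self_mem_nhdsWithin] with φ hφ
        exact Real.rpow_pos_of_pos (hsb φ hφ) _
    have hDi := hD.inv_tendsto_nhdsGT_zero
    have := hN.pos_mul_atTop hNpos hDi
    exact this.congr (fun φ => (div_eq_mul_inv _ _).symm)
  -- MapsTo
  have Fmaps : Set.MapsTo F (Ioo 0 c) (Ioi (β^β/b^b)) := by
    intro φ hφ
    have hψ : φ/2 ∈ Ioo 0 c := ⟨by linarith [hφ.1], by linarith [hφ.1, hφ.2]⟩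
    have hL2 : β^β/b^b ≤ F (φ/2) := by
      haveI : (nhdsWithin (0:ℝ) (Ioo 0 (φ/2))).NeBot :=
        left_nhdsWithin_Ioo_neBot (by linarith [hφ.1])
      apply le_of_tendsto (Ftend0.mono_left (nhdsWithin_mono 0 (Set.Ioo_subset_Ioo_right hψ.2.le)))
      filter_upwards [self_mem_nhdsWithin] with x hx
      exact (Fmono ⟨hx.1, hx.2.trans hψ.2⟩ hψ hx.2).le
    exact lt_of_le_of_lt hL2 (Fmono hψ hφ (by linarith [hφ.1]))
  -- SurjOn
  have Fsurj : Set.SurjOn F (Ioo 0 c) (Ioi (β^β/b^b)) := by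
    intro y hy
    haveI : (nhdsWithin (0:ℝ) (Ioo 0 c)).NeBot := left_nhdsWithin_Ioo_neBot hc
    haveI : (nhdsWithin c (Ioo 0 c)).NeBot := right_nhdsWithin_Ioo_neBot hc
    obtain ⟨x1, hfx1, hx1⟩ :=
      ((Ftend0.eventually_lt_const (Set.mem_Ioi.mp hy)).and eventually_mem_nhdsWithin).exists
    obtain ⟨x2, hfx2, hx2⟩ :=
      ((FtendTop.eventually_gt_atTop y).and eventually_mem_nhdsWithin).exists
    have hx12 : x1 < x2 := by
      rcases lt_trichotomy x1 x2 with h | h | h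
      · exact h
      · subst h; linarith
      · have := Fmono hx2 hx1 h; linarith
    have hsub : Set.Icc x1 x2 ⊆ Ioo 0 c :=
      fun z hz => ⟨lt_of_lt_of_le hx1.1 hz.1, lt_of_le_of_lt hz.2 hx2.2⟩
    obtain ⟨z, hz, hfz⟩ := intermediate_value_Icc hx12.le (Fcont.mono hsub) ⟨hfx1.le, hfx2.le⟩
    exact ⟨z, hsub hz, hfz⟩
  exact ⟨Fmono, Fmaps, Fmono.injOn, Fsurj⟩
end

section
/- Fix real numbers α, β > 0 and set φ₁(θ) = (π-θ)/(α+1), φ₂(θ) = θ/(β+1) for θ ∈ (0,π). Then the function u(θ) = sin(φ₂(θ))^{α+1} / sin(φ₁(θ))^{β+1} · sin(φ₁(θ)+φ₂(θ))^{β-α} is a strictly increasing bijection from (0,π) onto (0,∞). -/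
open Real Set Filter

set_option maxHeartbeats 1000000

theorem stmt_19 (α β : ℝ) (hα : 0 < α) (hβ : 0 < β) :
    StrictMonoOn
        (fun θ : ℝ =>
          Real.sin (θ / (β + 1)) ^ (α + 1) / Real.sin ((Real.pi - θ) / (α + 1)) ^ (β + 1) *
            Real.sin ((Real.pi - θ) / (α + 1) + θ / (β + 1)) ^ (β - α))
        (Set.Ioo 0 Real.pi) ∧
      Set.BijOn
        (fun θ : ℝ =>
          Real.sin (θ / (β + 1)) ^ (α + 1) / Real.sin ((Real.pi - θ) / (α + 1)) ^ (β + 1) *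
            Real.sin ((Real.pi - θ) / (α + 1) + θ / (β + 1)) ^ (β - α))
        (Set.Ioo 0 Real.pi) (Set.Ioi (0:ℝ)) := by
  have hpi := Real.pi_pos
  have ha : (0:ℝ) < α + 1 := by linarith
  have hb : (0:ℝ) < β + 1 := by linarith
  have ha1 : (1:ℝ) < α + 1 := by linarith
  have hb1 : (1:ℝ) < β + 1 := by linarith
  set f : ℝ → ℝ := fun θ =>
    Real.sin (θ / (β + 1)) ^ (α + 1) / Real.sin ((Real.pi - θ) / (α + 1)) ^ (β + 1) *
      Real.sin ((Real.pi - θ) / (α + 1) + θ / (β + 1)) ^ (β - α) with hf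
  -- angle facts on Ico 0 π
  have hu1 : ∀ θ ∈ Set.Ico (0:ℝ) Real.pi, 0 < Real.sin ((Real.pi - θ) / (α + 1)) := by
    intro θ hθ
    apply Real.sin_pos_of_pos_of_lt_pi
    · apply div_pos (by linarith [hθ.2]) ha
    · rw [div_lt_iff₀ ha]; nlinarith [hθ.1, hθ.2]
  have hu2 : ∀ θ ∈ Set.Ioo (0:ℝ) Real.pi, 0 < Real.sin (θ / (β + 1)) := by
    intro θ hθ
    apply Real.sin_pos_of_pos_of_lt_pi
    · exact div_pos hθ.1 hb
    · rw [div_lt_iff₀ hb]; nlinarith [hθ.1, hθ.2]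
  have hu3 : ∀ θ ∈ Set.Ico (0:ℝ) Real.pi,
      0 < Real.sin ((Real.pi - θ) / (α + 1) + θ / (β + 1)) := by
    intro θ hθ
    apply Real.sin_pos_of_pos_of_lt_pi
    · have h1 : 0 < (Real.pi - θ) / (α + 1) := div_pos (by linarith [hθ.2]) ha
      have h2 : 0 ≤ θ / (β + 1) := div_nonneg hθ.1 hb.le
      linarith
    · have h1 : (Real.pi - θ) / (α + 1) < Real.pi - θ := by
        rw [div_lt_iff₀ ha]; nlinarith [hθ.2]
      have h2 : θ / (β + 1) ≤ θ := by
        rw [div_le_iff₀ hb]; nlinarith [hθ.1]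
      linarith
  -- positivity of f on Ioo
  have hfpos : ∀ θ ∈ Set.Ioo (0:ℝ) Real.pi, 0 < f θ := by
    intro θ hθ
    have hθ' : θ ∈ Set.Ico (0:ℝ) Real.pi := ⟨hθ.1.le, hθ.2⟩
    exact mul_pos (div_pos (Real.rpow_pos_of_pos (hu2 θ hθ) _)
      (Real.rpow_pos_of_pos (hu1 θ hθ') _)) (Real.rpow_pos_of_pos (hu3 θ hθ') _)
  -- logarithmic version
  set g : ℝ → ℝ := fun θ =>
    (α + 1) * Real.log (Real.sin (θ / (β + 1)))
      - (β + 1) * Real.log (Real.sin ((Real.pi - θ) / (α + 1)))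
      + (β - α) * Real.log (Real.sin ((Real.pi - θ) / (α + 1) + θ / (β + 1))) with hg
  have hfg : ∀ θ ∈ Set.Ioo (0:ℝ) Real.pi, f θ = Real.exp (g θ) := by
    intro θ hθ
    have hθ' : θ ∈ Set.Ico (0:ℝ) Real.pi := ⟨hθ.1.le, hθ.2⟩
    rw [hf, hg]
    simp only
    rw [Real.rpow_def_of_pos (hu2 θ hθ), Real.rpow_def_of_pos (hu1 θ hθ'),
      Real.rpow_def_of_pos (hu3 θ hθ'), ← Real.exp_sub, ← Real.exp_add]
    congr 1
    ring
  -- derivative of g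
  have hgderiv : ∀ θ ∈ Set.Ioo (0:ℝ) Real.pi, ∃ D : ℝ, 0 < D ∧ HasDerivAt g D θ := by
    intro θ hθ
    have hθ' : θ ∈ Set.Ico (0:ℝ) Real.pi := ⟨hθ.1.le, hθ.2⟩
    set u1 : ℝ := (Real.pi - θ) / (α + 1) with hu1def
    set u2 : ℝ := θ / (β + 1) with hu2def
    have hs1 := hu1 θ hθ'
    have hs2 := hu2 θ hθ
    have hs3 := hu3 θ hθ'
    have hd2 : HasDerivAt (fun θ : ℝ => θ / (β + 1)) (1 / (β + 1)) θ := by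
      simpa using (hasDerivAt_id θ).div_const (β + 1)
    have hd1 : HasDerivAt (fun θ : ℝ => (Real.pi - θ) / (α + 1)) (-1 / (α + 1)) θ := by
      simpa using ((hasDerivAt_id θ).const_sub Real.pi).div_const (α + 1)
    have hd3 : HasDerivAt (fun θ : ℝ => (Real.pi - θ) / (α + 1) + θ / (β + 1))
        (-1 / (α + 1) + 1 / (β + 1)) θ := hd1.add hd2
    have hL2 : HasDerivAt (fun θ : ℝ => Real.log (Real.sin (θ / (β + 1))))
        (Real.cos u2 * (1 / (β + 1)) / Real.sin u2) θ :=
      (by have h := (Real.hasDerivAt_sin u2).comp θ hd2; exact h.log hs2.ne')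
    have hL1 : HasDerivAt (fun θ : ℝ => Real.log (Real.sin ((Real.pi - θ) / (α + 1))))
        (Real.cos u1 * (-1 / (α + 1)) / Real.sin u1) θ :=
      (by have h := (Real.hasDerivAt_sin u1).comp θ hd1; exact h.log hs1.ne')
    have hL3 : HasDerivAt
        (fun θ : ℝ => Real.log (Real.sin ((Real.pi - θ) / (α + 1) + θ / (β + 1))))
        (Real.cos (u1 + u2) * (-1 / (α + 1) + 1 / (β + 1)) / Real.sin (u1 + u2)) θ :=
      (by have h := (Real.hasDerivAt_sin (u1 + u2)).comp θ hd3; exact h.log hs3.ne')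
    set s1 := Real.sin u1 with hs1def
    set s2 := Real.sin u2 with hs2def
    set c1 := Real.cos u1 with hc1def
    set c2 := Real.cos u2 with hc2def
    set s3 := Real.sin (u1 + u2) with hs3def
    set c3 := Real.cos (u1 + u2) with hc3def
    have hsin3 : s3 = s1 * c2 + c1 * s2 := Real.sin_add u1 u2
    have hcos3 : c3 = c1 * c2 - s1 * s2 := Real.cos_add u1 u2
    set D := (α + 1) * (c2 * (1 / (β + 1)) / s2) - (β + 1) * (c1 * (-1 / (α + 1)) / s1)
      + (β - α) * (c3 * (-1 / (α + 1) + 1 / (β + 1)) / s3) with hD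
    have hDeriv : HasDerivAt g D θ :=
      ((hL2.const_mul (α + 1)).sub (hL1.const_mul (β + 1))).add (hL3.const_mul (β - α))
    refine ⟨D, ?_, hDeriv⟩
    have key : D * ((α + 1) * (β + 1) * s1 * s2 * s3)
        = ((α + 1) * s1 * c2 + (β + 1) * s2 * c1) ^ 2 + (α - β) ^ 2 * s1 ^ 2 * s2 ^ 2 := by
      rw [hD, hsin3, hcos3]
      rw [hsin3] at hs3
      have hs3' : c2 * s1 + s2 * c1 ≠ 0 := by rw [mul_comm c2, mul_comm s2]; exact hs3.ne'
      field_simp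
      ring
    have hrhs : 0 < ((α + 1) * s1 * c2 + (β + 1) * s2 * c1) ^ 2
        + (α - β) ^ 2 * s1 ^ 2 * s2 ^ 2 := by
      rcases eq_or_ne α β with h | h
      · subst h
        have he : (α + 1) * s1 * c2 + (α + 1) * s2 * c1 = (α + 1) * s3 := by
          rw [hsin3]; ring
        rw [he]
        have h1 : 0 < ((α + 1) * s3) ^ 2 := pow_pos (mul_pos ha hs3) 2
        have h2 : (0:ℝ) ≤ (α - α) ^ 2 * s1 ^ 2 * s2 ^ 2 := by positivity
        linarith
      · have h0 : 0 < (α - β) ^ 2 := by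
          have hne : α - β ≠ 0 := sub_ne_zero.mpr h
          positivity
        have h1 : 0 < (α - β) ^ 2 * s1 ^ 2 * s2 ^ 2 :=
          mul_pos (mul_pos h0 (pow_pos hs1 2)) (pow_pos hs2 2)
        have h2 := sq_nonneg ((α + 1) * s1 * c2 + (β + 1) * s2 * c1)
        linarith
    have hP : 0 < (α + 1) * (β + 1) * s1 * s2 * s3 := by positivity
    have hDval : D = (((α + 1) * s1 * c2 + (β + 1) * s2 * c1) ^ 2
        + (α - β) ^ 2 * s1 ^ 2 * s2 ^ 2) / ((α + 1) * (β + 1) * s1 * s2 * s3) :=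
      (eq_div_iff hP.ne').mpr key
    rw [hDval]
    exact div_pos hrhs hP
  -- g is strictly monotone
  have hgmono : StrictMonoOn g (Set.Ioo 0 Real.pi) := by
    apply strictMonoOn_of_deriv_pos (convex_Ioo 0 Real.pi)
    · intro x hx
      obtain ⟨D, _, hD⟩ := hgderiv x hx
      exact hD.continuousAt.continuousWithinAt
    · intro x hx
      rw [interior_Ioo] at hx
      obtain ⟨D, hDpos, hD⟩ := hgderiv x hx
      rw [hD.deriv]
      exact hDpos
  have hfmono : StrictMonoOn f (Set.Ioo 0 Real.pi) := by
    intro x hx y hy hxy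
    rw [hfg x hx, hfg y hy]
    exact Real.exp_lt_exp.mpr (hgmono hx hy hxy)
  -- continuity of f on Ico 0 π
  have hfcont : ContinuousOn f (Set.Ico 0 Real.pi) := by
    have t1 : Continuous fun θ : ℝ => Real.sin (θ / (β + 1)) ^ (α + 1) :=
      (Real.continuous_sin.comp (continuous_id.div_const (β + 1))).rpow_const
        (fun x => Or.inr (by linarith))
    have t2 : Continuous fun θ : ℝ => Real.sin ((Real.pi - θ) / (α + 1)) ^ (β + 1) :=
      (Real.continuous_sin.comp ((continuous_const.sub continuous_id).div_const (α + 1))).rpow_const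
        (fun x => Or.inr (by linarith))
    have t3 : ContinuousOn (fun θ : ℝ =>
        Real.sin ((Real.pi - θ) / (α + 1) + θ / (β + 1)) ^ (β - α)) (Set.Ico 0 Real.pi) := by
      apply ContinuousOn.rpow_const
      · exact (Real.continuous_sin.comp (((continuous_const.sub continuous_id).div_const (α + 1)).add
          (continuous_id.div_const (β + 1)))).continuousOn
      · intro x hx
        exact Or.inl (hu3 x hx).ne'
    exact ((t1.continuousOn.div t2.continuousOn
      (fun x hx => (Real.rpow_pos_of_pos (hu1 x hx) _).ne')).mul t3)
  have hf0 : f 0 = 0 := by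
    rw [hf]
    simp [Real.zero_rpow ha.ne']
  -- tendsto atTop at π
  have htend : Filter.Tendsto f (nhdsWithin Real.pi (Set.Ioo 0 Real.pi)) Filter.atTop := by
    have hfeq : ∀ θ : ℝ, f θ = (Real.sin (θ / (β + 1)) ^ (α + 1) *
        Real.sin ((Real.pi - θ) / (α + 1) + θ / (β + 1)) ^ (β - α)) *
        (Real.sin ((Real.pi - θ) / (α + 1)) ^ (β + 1))⁻¹ := by
      intro θ; rw [hf]; ring
    have hπb : 0 < Real.sin (Real.pi / (β + 1)) := by
      apply Real.sin_pos_of_pos_of_lt_pi (div_pos hpi hb)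
      rw [div_lt_iff₀ hb]; nlinarith
    have hN : Filter.Tendsto (fun θ : ℝ => Real.sin (θ / (β + 1)) ^ (α + 1) *
        Real.sin ((Real.pi - θ) / (α + 1) + θ / (β + 1)) ^ (β - α))
        (nhdsWithin Real.pi (Set.Ioo 0 Real.pi))
        (nhds (Real.sin (Real.pi / (β + 1)) ^ (α + 1) *
          Real.sin ((Real.pi - Real.pi) / (α + 1) + Real.pi / (β + 1)) ^ (β - α))) := by
      apply Filter.Tendsto.mono_left _ nhdsWithin_le_nhds
      apply ContinuousAt.tendsto
      apply ContinuousAt.mul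
      · exact ((Real.continuous_sin.comp (continuous_id.div_const (β + 1))).rpow_const
          (fun x => Or.inr (by linarith))).continuousAt
      · apply ContinuousAt.rpow_const
        · exact (Real.continuous_sin.comp (((continuous_const.sub continuous_id).div_const
            (α + 1)).add (continuous_id.div_const (β + 1)))).continuousAt
        · left
          simp only [sub_self, zero_div, zero_add]
          exact hπb.ne'
    have hLpos : 0 < Real.sin (Real.pi / (β + 1)) ^ (α + 1) *
        Real.sin ((Real.pi - Real.pi) / (α + 1) + Real.pi / (β + 1)) ^ (β - α) := by
      simp only [sub_self, zero_div, zero_add]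
      exact mul_pos (Real.rpow_pos_of_pos hπb _) (Real.rpow_pos_of_pos hπb _)
    have hden : Filter.Tendsto (fun θ : ℝ => Real.sin ((Real.pi - θ) / (α + 1)) ^ (β + 1))
        (nhdsWithin Real.pi (Set.Ioo 0 Real.pi)) (nhdsWithin 0 (Set.Ioi 0)) := by
      rw [tendsto_nhdsWithin_iff]
      constructor
      · have : Filter.Tendsto (fun θ : ℝ => Real.sin ((Real.pi - θ) / (α + 1)) ^ (β + 1))
            (nhds Real.pi) (nhds (Real.sin ((Real.pi - Real.pi) / (α + 1)) ^ (β + 1))) := by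
          apply ContinuousAt.tendsto
          exact ((Real.continuous_sin.comp ((continuous_const.sub continuous_id).div_const
            (α + 1))).rpow_const (fun x => Or.inr (by linarith))).continuousAt
        simpa [Real.zero_rpow hb.ne'] using this.mono_left nhdsWithin_le_nhds
      · filter_upwards [self_mem_nhdsWithin] with θ hθ
        exact Real.rpow_pos_of_pos (hu1 θ ⟨hθ.1.le, hθ.2⟩) _
    have hinv : Filter.Tendsto (fun θ : ℝ => (Real.sin ((Real.pi - θ) / (α + 1)) ^ (β + 1))⁻¹)
        (nhdsWithin Real.pi (Set.Ioo 0 Real.pi)) Filter.atTop :=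
      tendsto_inv_nhdsGT_zero.comp hden
    have := hN.pos_mul_atTop hLpos hinv
    · exact Filter.Tendsto.congr (fun θ => (hfeq θ).symm) this
  -- the final bijection
  refine ⟨hfmono, ⟨fun θ hθ => hfpos θ hθ, hfmono.injOn, ?_⟩⟩
  intro y hy
  have hy0 : (0:ℝ) < y := hy
  haveI : (nhdsWithin Real.pi (Set.Ioo 0 Real.pi)).NeBot :=
    right_nhdsWithin_Ioo_neBot hpi
  obtain ⟨θ₀, hθ₀mem, hθ₀⟩ : ∃ θ₀, θ₀ ∈ Set.Ioo (0:ℝ) Real.pi ∧ y < f θ₀ := by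
    have h1 := htend.eventually (Filter.eventually_gt_atTop y)
    have h2 : ∀ᶠ θ in nhdsWithin Real.pi (Set.Ioo 0 Real.pi), θ ∈ Set.Ioo (0:ℝ) Real.pi :=
      self_mem_nhdsWithin
    obtain ⟨θ₀, h, h'⟩ := (h2.and h1).exists
    exact ⟨θ₀, h, h'⟩
  have hIcc : Set.Icc (0:ℝ) θ₀ ⊆ Set.Ico 0 Real.pi := fun x hx => ⟨hx.1, lt_of_le_of_lt hx.2 hθ₀mem.2⟩
  have hsub := intermediate_value_Ioo hθ₀mem.1.le (hfcont.mono hIcc)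
  have : y ∈ Set.Ioo (f 0) (f θ₀) := by rw [hf0]; exact ⟨hy0, hθ₀⟩
  obtain ⟨x, hx, hfx⟩ := hsub this
  exact ⟨x, ⟨hx.1, lt_trans hx.2 hθ₀mem.2⟩, hfx⟩
end
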